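/- arXiv:2605.03911 — 2 statements merged into one kernel-verified Lean document; each statement's English description precedes it below -/
import Mathlib

section
/- (Second-order bias bound for the plug-in influence function.) Let p̂_z, π̂_z : 𝒳→[c_1, 1−c_1] and ê_{11}, ê_{10}, ŵ, δ̂* : 𝒳→[−c_2,c_2] be arbitrary functions with |p̂_1(x)−p̂_0(x)| ≥ c_3 and |p_1(x)−p_0(x)| ≥ c_3 for all x, and set φ̂ := ê_{11}−ê_{10}, ρ̂ := p̂_1π̂_1 + p̂_0π̂_0. Define M := Aδ*(X) + θ(O) and M̂ := Aδ̂*(X) + θ̂(O), where θ̂(O) = [ρ̂(X)/(p̂_1(X)−p̂_0(X))]·[(2Z−1)/π̂_Z(X)]·{Y−Aδ̂*(X)−Zφ̂(X)−ŵ(X)−(A/p̂_Z(X))·(Y−Zφ̂(X)−ê_{10}(X))}. For a function f on 𝒳 and its estimate f̂, write r_f := (E[(f̂(X)−f(X))²])^{1/2}. Then there exists a constant C, depending only on c_1, c_2, c_3 and a uniform bound on the true nuisance functions, such that |E[M̂ − M]| ≤ C·[ r_{δ*}(r_{p_1}+r_{p_0}+r_{π_1}+r_{π_0}) + r_{φ}·r_{p_1}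 + r_w(r_{π_1}+r_{π_0}) + r_{e_{10}}(r_{π_1}+r_{π_0}+r_{p_1}+r_{p_0}) ]; in particular the bias of the plug-in influence function is second order in the nuisance estimation errors. -/
set_option maxHeartbeats 2000000


open MeasureTheory

/-- The probability of an event, as a real number. -/
noncomputable def prb {Ω : Type*} [MeasurableSpace Ω] (P : Measure Ω) (s : Set Ω) : ℝ :=
  (P s).toReal

/-- Conditional probability `P(s | t)` as a real number. -/
noncomputable def cprb {Ω : Type*} [MeasurableSpace Ω] (P : Measure Ω) (s t : Set Ω) : ℝ :=
  prb P (s ∩ t) / prb P t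

/-- Conditional expectation `E[Y | t]` as a real number. -/
noncomputable def cex {Ω : Type*} [MeasurableSpace Ω] (P : Measure Ω) (Y : Ω → ℝ)
    (t : Set Ω) : ℝ :=
  (∫ ω in t, Y ω ∂P) / prb P t

/-- A `{0,1}`-valued variable as a real number. -/
noncomputable def b2r (b : Bool) : ℝ := if b then 1 else 0


theorem keyT1 (p1 p0 v1 v0 dl f w E Px : ℝ) (hp1n : p1 ≠ 0) (hv1n : v1 ≠ 0) (hDp : p1 - p0 ≠ 0) :
    ((p1*v1+p0*v0) / (p1 - p0) * (1 / v1) * (-(1) * dl - (1) * f - w + ((1) / p1) * ((1) * f + E)) * (p1 * v1 * Px) + (p1*v1+p0*v0) / (p1 - p0) * (1 / v1) * (1 - (1) / p1) * ((f + E) * p1 * v1 * Px)) + ((p1*v1+p0*v0) / (p1 - p0) * (1 / v1) * (-(0) * dl - (1) * f - w + ((0) / p1) * ((1) * f + E)) * ((1 - p1) * v1 * Px) + (p1*v1+p0*v0) / (p1 - p0) * (1 / v1) * (1 - (0) / p1) * (((p1*dl + f + w) - p1 * (f + E)) * v1 * Px)) = 0 := by field_simp; ring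

theorem keyT0 (p1 p0 v1 v0 dl f w E Px : ℝ) (hp0n : p0 ≠ 0) (hv0n : v0 ≠ 0) (hDp : p1 - p0 ≠ 0) :
    ((p1*v1+p0*v0) / (p1 - p0) * ((-1) / v0) * (-(1) * dl - (0) * f - w + ((1) / p0) * ((0) * f + E)) * (p0 * v0 * Px) + (p1*v1+p0*v0) / (p1 - p0) * ((-1) / v0) * (1 - (1) / p0) * (E * p0 * v0 * Px)) + ((p1*v1+p0*v0) / (p1 - p0) * ((-1) / v0) * (-(0) * dl - (0) * f - w + ((0) / p0) * ((0) * f + E)) * ((1 - p0) * v0 * Px) + (p1*v1+p0*v0) / (p1 - p0) * ((-1) / v0) * (1 - (0) / p0) * (((p0*dl + w) - p0 * E) * v0 * Px)) = 0 := by field_simp; ring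

theorem keyH1 (p1 v1 dl f w E Px hp1 hp0 hv1 hv0 hE1 hE0 hw hd : ℝ)
    (hhp1 : hp1 ≠ 0) (hhv1 : hv1 ≠ 0) (hDph : hp1 - hp0 ≠ 0) :
    (1) * (hd - dl) * (p1 * v1 * Px) + ((hp1*hv1+hp0*hv0) / (hp1 - hp0) * (1 / hv1) * (-(1) * hd - (1) * (hE1 - hE0) - hw + ((1) / hp1) * ((1) * (hE1 - hE0) + hE0)) * (p1 * v1 * Px) + (hp1*hv1+hp0*hv0) / (hp1 - hp0) * (1 / hv1) * (1 - (1) / hp1) * ((f + E) * p1 * v1 * Px)) + (0) * (hd - dl) * ((1 - p1) * v1 * Px) + ((hp1*hv1+hp0*hv0) / (hp1 - hp0) * (1 / hv1) * (-(0) * hd - (1) * (hE1 - hE0) - hw + ((0) / hp1) * ((1) * (hE1 - hE0) + hE0)) * ((1 - p1) * v1 * Px) + (hp1*hv1+hp0*hv0) / (hp1 - hp0) * (1 / hv1) * (1 - (0) / hp1) * (((p1*dl + f + w) - p1 * (f + E)) * v1 * Px)) = Px * v1 * ((hd - dl) * p1 + 1 * (hp1*hv1+hp0*hv0) / ((hp1-hp0)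 * hv1) * (-p1 * (hd - dl) - (1) * ((hE1 - hE0) - f) - (hw - w) + (p1 / hp1) * ((1) * ((hE1 - hE0) - f) + (hE0 - E)))) := by field_simp; ring

theorem keyH0 (p0 v0 dl f w E Px hp1 hp0 hv1 hv0 hE1 hE0 hw hd : ℝ)
    (hhp0 : hp0 ≠ 0) (hhv0 : hv0 ≠ 0) (hDph : hp1 - hp0 ≠ 0) :
    (1) * (hd - dl) * (p0 * v0 * Px) + ((hp1*hv1+hp0*hv0) / (hp1 - hp0) * ((-1) / hv0) * (-(1) * hd - (0) * (hE1 - hE0) - hw + ((1) / hp0) * ((0) * (hE1 - hE0) + hE0)) * (p0 * v0 * Px) + (hp1*hv1+hp0*hv0) / (hp1 - hp0) * ((-1) / hv0) * (1 - (1) / hp0) * (E * p0 * v0 * Px)) + (0) * (hd - dl) * ((1 - p0) * v0 * Px) + ((hp1*hv1+hp0*hv0) / (hp1 - hp0) * ((-1) / hv0) * (-(0) * hd - (0) * (hE1 - hE0) - hw + ((0) / hp0) * ((0) * (hE1 - hE0) + hE0)) * ((1 - p0) * v0 * Px) + (hp1*hv1+hp0*hv0) / (hp1 - hp0) * ((-1)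 / hv0) * (1 - (0) / hp0) * (((p0*dl + w) - p0 * E) * v0 * Px)) = Px * v0 * ((hd - dl) * p0 + (-1) * (hp1*hv1+hp0*hv0) / ((hp1-hp0) * hv0) * (-p0 * (hd - dl) - (0) * ((hE1 - hE0) - f) - (hw - w) + (p0 / hp0) * ((0) * ((hE1 - hE0) - f) + (hE0 - E)))) := by field_simp; ring

theorem keyS2 (p1 p0 v1 v0 Px hp1 hp0 hv1 hv0 Dd Df Dw De : ℝ)
    (hhp1 : hp1 ≠ 0) (hhp0 : hp0 ≠ 0) (hhv1 : hv1 ≠ 0) (hhv0 : hv0 ≠ 0) (hDph : hp1 - hp0 ≠ 0) :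
    Px * v1 * (Dd * p1 + 1 * (hp1*hv1+hp0*hv0) / ((hp1-hp0) * hv1) * (-p1 * Dd - (1) * Df - Dw + (p1 / hp1) * ((1) * Df + De))) + Px * v0 * (Dd * p0 + (-1) * (hp1*hv1+hp0*hv0) / ((hp1-hp0) * hv0) * (-p0 * Dd - (0) * Df - Dw + (p0 / hp0) * ((0) * Df + De)))
    = Px * (Dd * (((p1*v1+p0*v0) - hv1*(p1-p0)) / (hp1-hp0) * (hp1-p1) + (-(p1*v1+p0*v0) - hv0*(p1-p0)) / (hp1-hp0) * (hp0-p0) + (p1*(hp1*hv1+hp0*hv0) - p1*hv1*(p1-p0)) / (hv1*(hp1-hp0)) * (hv1-v1) + (-p0*(hp1*hv1+hp0*hv0) - p0*hv0*(p1-p0)) / (hv0*(hp1-hp0)) * (hv0-v0))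
    + Df * ((-(hp1*hv1+hp0*hv0)*v1) / ((hp1-hp0)*hv1*hp1) * (hp1-p1))
    + Dw * (((hp1*hv1+hp0*hv0)*v0) / ((hp1-hp0)*hv0*hv1) * (hv1-v1) + (-(hp1*hv1+hp0*hv0)*v1) / ((hp1-hp0)*hv0*hv1) * (hv0-v0))
    + De * ((-(hp1*hv1+hp0*hv0)*p1) / ((hp1-hp0)*hv1*hp1) * (hv1-v1) + ((hp1*hv1+hp0*hv0)*p0) / ((hp1-hp0)*hv0*hp0) * (hv0-v0) + (-(hp1*hv1+hp0*hv0)) / ((hp1-hp0)*hp1) * (hp1-p1) + ((hp1*hv1+hp0*hv0)) / ((hp1-hp0)*hp0) * (hp0-p0))) := by field_simp; ring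

set_option maxHeartbeats 1000000 in
theorem keyIdentity (p1 p0 v1 v0 dl f w E Px hp1 hp0 hv1 hv0 hE1 hE0 hw hd : ℝ)
    (hp1n : p1 ≠ 0) (hp0n : p0 ≠ 0) (hv1n : v1 ≠ 0) (hv0n : v0 ≠ 0)
    (hDp : p1 - p0 ≠ 0) (hhp1 : hp1 ≠ 0) (hhp0 : hp0 ≠ 0)
    (hhv1 : hv1 ≠ 0) (hhv0 : hv0 ≠ 0) (hDph : hp1 - hp0 ≠ 0) :
    ((1) * (hd - dl) * (p1 * v1 * Px) + ((hp1*hv1+hp0*hv0) / (hp1 - hp0) * (1 / hv1) * (-(1) * hd - (1) * (hE1 - hE0) - hw + ((1) / hp1) * ((1) * (hE1 - hE0) + hE0)) * (p1 * v1 * Px) + (hp1*hv1+hp0*hv0) / (hp1 - hp0) * (1 / hv1) * (1 - (1) / hp1) * ((f + E) * p1 * v1 * Px)) - ((p1*v1+p0*v0) / (p1 - p0) * (1 / v1) * (-(1) * dl - (1) * f - w + ((1) / p1) * ((1) * f + E)) * (p1 * v1 * Px) + (p1*v1+p0*v0) / (p1 - p0) * (1 / v1) * (1 - (1) / p1) *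 ((f + E) * p1 * v1 * Px)))
      + ((1) * (hd - dl) * (p0 * v0 * Px) + ((hp1*hv1+hp0*hv0) / (hp1 - hp0) * ((-1) / hv0) * (-(1) * hd - (0) * (hE1 - hE0) - hw + ((1) / hp0) * ((0) * (hE1 - hE0) + hE0)) * (p0 * v0 * Px) + (hp1*hv1+hp0*hv0) / (hp1 - hp0) * ((-1) / hv0) * (1 - (1) / hp0) * (E * p0 * v0 * Px)) - ((p1*v1+p0*v0) / (p1 - p0) * ((-1) / v0) * (-(1) * dl - (0) * f - w + ((1) / p0) * ((0) * f + E)) * (p0 * v0 * Px) + (p1*v1+p0*v0) / (p1 - p0) * ((-1) / v0) * (1 - (1) / p0) * (E * p0 * v0 * Px)))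
      + ((0) * (hd - dl) * ((1 - p1) * v1 * Px) + ((hp1*hv1+hp0*hv0) / (hp1 - hp0) * (1 / hv1) * (-(0) * hd - (1) * (hE1 - hE0) - hw + ((0) / hp1) * ((1) * (hE1 - hE0) + hE0)) * ((1 - p1) * v1 * Px) + (hp1*hv1+hp0*hv0) / (hp1 - hp0) * (1 / hv1) * (1 - (0) / hp1) * (((p1*dl + f + w) - p1 * (f + E)) * v1 * Px)) - ((p1*v1+p0*v0) / (p1 - p0) * (1 / v1) * (-(0) * dl - (1) * f - w + ((0) / p1) * ((1) * f + E)) * ((1 - p1) * v1 * Px) + (p1*v1+p0*v0) / (p1 - p0) * (1 / v1) * (1 - (0) / p1) * (((p1*dl + f + w) - p1 * (f + E)) * v1 * Px)))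
      + ((0) * (hd - dl) * ((1 - p0) * v0 * Px) + ((hp1*hv1+hp0*hv0) / (hp1 - hp0) * ((-1) / hv0) * (-(0) * hd - (0) * (hE1 - hE0) - hw + ((0) / hp0) * ((0) * (hE1 - hE0) + hE0)) * ((1 - p0) * v0 * Px) + (hp1*hv1+hp0*hv0) / (hp1 - hp0) * ((-1) / hv0) * (1 - (0) / hp0) * (((p0*dl + w) - p0 * E) * v0 * Px)) - ((p1*v1+p0*v0) / (p1 - p0) * ((-1) / v0) * (-(0) * dl - (0) * f - w + ((0) / p0) * ((0) * f + E)) * ((1 - p0) * v0 * Px) + (p1*v1+p0*v0) / (p1 - p0) * ((-1) / v0) * (1 - (0) / p0) * (((p0*dl + w) - p0 * E) * v0 * Px)))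
    = Px * ((hd - dl) * (((p1*v1+p0*v0) - hv1*(p1-p0)) / (hp1-hp0) * (hp1-p1) + (-(p1*v1+p0*v0) - hv0*(p1-p0)) / (hp1-hp0) * (hp0-p0) + (p1*(hp1*hv1+hp0*hv0) - p1*hv1*(p1-p0)) / (hv1*(hp1-hp0)) * (hv1-v1) + (-p0*(hp1*hv1+hp0*hv0) - p0*hv0*(p1-p0)) / (hv0*(hp1-hp0)) * (hv0-v0))
    + ((hE1 - hE0) - f) * ((-(hp1*hv1+hp0*hv0)*v1) / ((hp1-hp0)*hv1*hp1) * (hp1-p1))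
    + (hw - w) * (((hp1*hv1+hp0*hv0)*v0) / ((hp1-hp0)*hv0*hv1) * (hv1-v1) + (-(hp1*hv1+hp0*hv0)*v1) / ((hp1-hp0)*hv0*hv1) * (hv0-v0))
    + (hE0 - E) * ((-(hp1*hv1+hp0*hv0)*p1) / ((hp1-hp0)*hv1*hp1) * (hv1-v1) + ((hp1*hv1+hp0*hv0)*p0) / ((hp1-hp0)*hv0*hp0) * (hv0-v0) + (-(hp1*hv1+hp0*hv0)) / ((hp1-hp0)*hp1) * (hp1-p1) + ((hp1*hv1+hp0*hv0)) / ((hp1-hp0)*hp0) * (hp0-p0))) := by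
  linear_combination (keyH1 p1 v1 dl f w E Px hp1 hp0 hv1 hv0 hE1 hE0 hw hd hhp1 hhv1 hDph)
    + (keyH0 p0 v0 dl f w E Px hp1 hp0 hv1 hv0 hE1 hE0 hw hd hhp0 hhv0 hDph)
    - (keyT1 p1 p0 v1 v0 dl f w E Px hp1n hv1n hDp)
    - (keyT0 p1 p0 v1 v0 dl f w E Px hp0n hv0n hDp)
    + (keyS2 p1 p0 v1 v0 Px hp1 hp0 hv1 hv0 (hd - dl) ((hE1 - hE0) - f) (hw - w) (hE0 - E) hhp1 hhp0 hhv1 hhv0 hDph)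

theorem coefBound (c1 c3 n d : ℝ) (hc1 : 0 < c1) (hc3 : 0 < c3)
    (hn : |n| ≤ 3) (hd : c3 * c1 * c1 ≤ |d|) : |n / d| ≤ 4 / (c3 * c1 * c1) := by
  have hpos : 0 < c3 * c1 * c1 := by positivity
  rw [abs_div]
  calc |n| / |d| ≤ 3 / (c3 * c1 * c1) := div_le_div₀ (by norm_num) hn hpos hd
    _ ≤ 4 / (c3 * c1 * c1) := by gcongr; norm_num

theorem boundLemma (c1 c3 p1 p0 v1 v0 Px hp1 hp0 hv1 hv0 Dd Df Dw De : ℝ)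
    (hc1 : 0 < c1) (hc1' : c1 < 1/2) (hc3 : 0 < c3) (hPx : 0 ≤ Px)
    (hp1b : c1 ≤ p1) (hp1b' : p1 ≤ 1 - c1)
    (hp0b : c1 ≤ p0) (hp0b' : p0 ≤ 1 - c1)
    (hv1b : c1 ≤ v1) (hv1b' : v1 ≤ 1 - c1)
    (hv0b : c1 ≤ v0) (hv0b' : v0 ≤ 1 - c1)
    (hhp1b : c1 ≤ hp1) (hhp1b' : hp1 ≤ 1 - c1)
    (hhp0b : c1 ≤ hp0) (hhp0b' : hp0 ≤ 1 - c1)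
    (hhv1b : c1 ≤ hv1) (hhv1b' : hv1 ≤ 1 - c1)
    (hhv0b : c1 ≤ hv0) (hhv0b' : hv0 ≤ 1 - c1)
    (hDph : c3 ≤ |hp1 - hp0|) :
    |Px * (Dd * (((p1*v1+p0*v0) - hv1*(p1-p0)) / (hp1-hp0) * (hp1-p1) + (-(p1*v1+p0*v0) - hv0*(p1-p0)) / (hp1-hp0) * (hp0-p0) + (p1*(hp1*hv1+hp0*hv0) - p1*hv1*(p1-p0)) / (hv1*(hp1-hp0)) * (hv1-v1) + (-p0*(hp1*hv1+hp0*hv0) - p0*hv0*(p1-p0)) / (hv0*(hp1-hp0)) * (hv0-v0))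
    + Df * ((-(hp1*hv1+hp0*hv0)*v1) / ((hp1-hp0)*hv1*hp1) * (hp1-p1))
    + Dw * (((hp1*hv1+hp0*hv0)*v0) / ((hp1-hp0)*hv0*hv1) * (hv1-v1) + (-(hp1*hv1+hp0*hv0)*v1) / ((hp1-hp0)*hv0*hv1) * (hv0-v0))
    + De * ((-(hp1*hv1+hp0*hv0)*p1) / ((hp1-hp0)*hv1*hp1) * (hv1-v1) + ((hp1*hv1+hp0*hv0)*p0) / ((hp1-hp0)*hv0*hp0) * (hv0-v0) + (-(hp1*hv1+hp0*hv0)) / ((hp1-hp0)*hp1) * (hp1-p1) + ((hp1*hv1+hp0*hv0)) / ((hp1-hp0)*hp0) * (hp0-p0)))|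
    ≤ 4 / (c3 * c1 * c1) * (Px * (|Dd| * (|hp1 - p1| + |hp0 - p0| + |hv1 - v1| + |hv0 - v0|)
        + |Df| * |hp1 - p1| + |Dw| * (|hv1 - v1| + |hv0 - v0|)
        + |De| * (|hv1 - v1| + |hv0 - v0| + |hp1 - p1| + |hp0 - p0|))) := by
  have hc1' : c1 ≤ 1 := by linarith
  have hDpabs : |p1 - p0| ≤ 1 := abs_le.2 ⟨by linarith, by linarith⟩
  have hnum2 : ∀ a b c d : ℝ, 0 ≤ a → a ≤ 1 → 0 ≤ b → b ≤ 1 → 0 ≤ c → c ≤ 1 → 0 ≤ d → d ≤ 1 →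
      |a * b + c * d| ≤ 2 := by
    intro a b c d ha ha' hb hb' hc hc' hd hd'
    rw [abs_le]; constructor <;> nlinarith
  have hrho2 : |p1 * v1 + p0 * v0| ≤ 2 := by
    apply hnum2 <;> linarith
  have hrhoh2 : |hp1 * hv1 + hp0 * hv0| ≤ 2 := by
    apply hnum2 <;> linarith
  have hcc : c1 * c1 ≤ 1 := by nlinarith
  have hd1 : c3 * c1 * c1 ≤ |hp1 - hp0| := by nlinarith [mul_le_mul_of_nonneg_left hcc hc3.le]
  have hd2 : ∀ y : ℝ, c1 ≤ y → c3 * c1 * c1 ≤ |y * (hp1 - hp0)| := by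
    intro y hy
    rw [abs_mul, abs_of_nonneg (by linarith : (0:ℝ) ≤ y)]
    have h1 : c1 * c3 ≤ y * |hp1 - hp0| := mul_le_mul hy hDph hc3.le (le_trans hc1.le hy)
    nlinarith [mul_pos hc3 hc1]
  have hd2' : ∀ y : ℝ, c1 ≤ y → c3 * c1 * c1 ≤ |(hp1 - hp0) * y| := by
    intro y hy
    rw [abs_mul, abs_of_nonneg (by linarith : (0:ℝ) ≤ y)]
    have h1 : c3 * c1 ≤ |hp1 - hp0| * y := mul_le_mul hDph hy hc1.le (abs_nonneg _)
    nlinarith [mul_pos hc3 hc1]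
  have hd3 : ∀ y y' : ℝ, c1 ≤ y → c1 ≤ y' → c3 * c1 * c1 ≤ |(hp1 - hp0) * y * y'| := by
    intro y y' hy hy'
    rw [abs_mul, abs_mul, abs_of_nonneg (by linarith : (0:ℝ) ≤ y),
      abs_of_nonneg (by linarith : (0:ℝ) ≤ y')]
    have h1 : c3 * c1 ≤ |hp1 - hp0| * y := mul_le_mul hDph hy hc1.le (abs_nonneg _)
    calc c3 * c1 * c1 ≤ |hp1 - hp0| * y * y' :=
          mul_le_mul h1 hy' hc1.le (mul_nonneg (abs_nonneg _) (by linarith))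
      _ = _ := rfl
  set K := 4 / (c3 * c1 * c1) with hK
  have hKpos : 0 < K := by positivity
  -- coefficient bounds
  have hA1 : |((p1*v1+p0*v0) - hv1*(p1-p0)) / (hp1-hp0)| ≤ K := by
    apply coefBound _ _ _ _ hc1 hc3 _ hd1
    calc |(p1*v1+p0*v0) - hv1*(p1-p0)| ≤ |p1*v1+p0*v0| + |hv1*(p1-p0)| := abs_sub _ _
      _ ≤ 2 + 1 := by
          refine add_le_add hrho2 ?_
          rw [abs_mul, abs_of_nonneg (by linarith : (0:ℝ) ≤ hv1)]
          nlinarith [abs_nonneg (p1 - p0)]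
      _ ≤ 3 := by norm_num
  have hA0 : |(-(p1*v1+p0*v0) - hv0*(p1-p0)) / (hp1-hp0)| ≤ K := by
    apply coefBound _ _ _ _ hc1 hc3 _ hd1
    calc |(-(p1*v1+p0*v0)) - hv0*(p1-p0)| ≤ |(-(p1*v1+p0*v0))| + |hv0*(p1-p0)| := abs_sub _ _
      _ ≤ 2 + 1 := by
          refine add_le_add (by rwa [abs_neg]) ?_
          rw [abs_mul, abs_of_nonneg (by linarith : (0:ℝ) ≤ hv0)]
          nlinarith [abs_nonneg (p1 - p0)]
      _ ≤ 3 := by norm_num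
  have hB1 : |(p1*(hp1*hv1+hp0*hv0) - p1*hv1*(p1-p0)) / (hv1*(hp1-hp0))| ≤ K := by
    apply coefBound _ _ _ _ hc1 hc3 _ (hd2 _ hhv1b)
    calc |p1*(hp1*hv1+hp0*hv0) - p1*hv1*(p1-p0)|
        ≤ |p1*(hp1*hv1+hp0*hv0)| + |p1*hv1*(p1-p0)| := abs_sub _ _
      _ ≤ 2 + 1 := by
          refine add_le_add ?_ ?_
          · rw [abs_mul, abs_of_nonneg (by linarith : (0:ℝ) ≤ p1)]
            nlinarith [abs_nonneg (hp1*hv1+hp0*hv0)]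
          · rw [abs_mul, abs_mul, abs_of_nonneg (by linarith : (0:ℝ) ≤ p1),
              abs_of_nonneg (by linarith : (0:ℝ) ≤ hv1)]
            exact mul_le_one₀ (by nlinarith) (abs_nonneg _) hDpabs
      _ ≤ 3 := by norm_num
  have hB0 : |(-p0*(hp1*hv1+hp0*hv0) - p0*hv0*(p1-p0)) / (hv0*(hp1-hp0))| ≤ K := by
    apply coefBound _ _ _ _ hc1 hc3 _ (hd2 _ hhv0b)
    calc |(-p0*(hp1*hv1+hp0*hv0)) - p0*hv0*(p1-p0)|
        ≤ |(-p0*(hp1*hv1+hp0*hv0))| + |p0*hv0*(p1-p0)| := abs_sub _ _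
      _ ≤ 2 + 1 := by
          refine add_le_add ?_ ?_
          · rw [show -p0*(hp1*hv1+hp0*hv0) = -(p0*(hp1*hv1+hp0*hv0)) by ring, abs_neg,
              abs_mul, abs_of_nonneg (by linarith : (0:ℝ) ≤ p0)]
            nlinarith [abs_nonneg (hp1*hv1+hp0*hv0)]
          · rw [abs_mul, abs_mul, abs_of_nonneg (by linarith : (0:ℝ) ≤ p0),
              abs_of_nonneg (by linarith : (0:ℝ) ≤ hv0)]
            exact mul_le_one₀ (by nlinarith) (abs_nonneg _) hDpabs
      _ ≤ 3 := by norm_num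
  have habs2 : ∀ y : ℝ, 0 ≤ y → y ≤ 1 → |(hp1*hv1+hp0*hv0)*y| ≤ 3 := by
    intro y hy hy'
    rw [abs_mul, abs_of_nonneg hy]
    nlinarith [abs_nonneg (hp1*hv1+hp0*hv0)]
  have habs2' : ∀ y : ℝ, 0 ≤ y → y ≤ 1 → |-(hp1*hv1+hp0*hv0)*y| ≤ 3 := by
    intro y hy hy'
    rw [show -(hp1*hv1+hp0*hv0)*y = -((hp1*hv1+hp0*hv0)*y) by ring, abs_neg]
    exact habs2 y hy hy'
  have hC : |(-(hp1*hv1+hp0*hv0)*v1) / ((hp1-hp0)*hv1*hp1)| ≤ K :=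
    coefBound _ _ _ _ hc1 hc3 (habs2' v1 (by linarith) (by linarith)) (hd3 _ _ hhv1b hhp1b)
  have hD1 : |((hp1*hv1+hp0*hv0)*v0) / ((hp1-hp0)*hv0*hv1)| ≤ K :=
    coefBound _ _ _ _ hc1 hc3 (habs2 v0 (by linarith) (by linarith)) (hd3 _ _ hhv0b hhv1b)
  have hD0 : |(-(hp1*hv1+hp0*hv0)*v1) / ((hp1-hp0)*hv0*hv1)| ≤ K :=
    coefBound _ _ _ _ hc1 hc3 (habs2' v1 (by linarith) (by linarith)) (hd3 _ _ hhv0b hhv1b)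
  have hF1 : |(-(hp1*hv1+hp0*hv0)*p1) / ((hp1-hp0)*hv1*hp1)| ≤ K :=
    coefBound _ _ _ _ hc1 hc3 (habs2' p1 (by linarith) (by linarith)) (hd3 _ _ hhv1b hhp1b)
  have hF0 : |((hp1*hv1+hp0*hv0)*p0) / ((hp1-hp0)*hv0*hp0)| ≤ K :=
    coefBound _ _ _ _ hc1 hc3 (habs2 p0 (by linarith) (by linarith)) (hd3 _ _ hhv0b hhp0b)
  have hG1 : |(-(hp1*hv1+hp0*hv0)) / ((hp1-hp0)*hp1)| ≤ K := by
    apply coefBound _ _ _ _ hc1 hc3 _ (hd2' _ hhp1b)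
    rw [abs_neg]; linarith
  have hG0 : |(hp1*hv1+hp0*hv0) / ((hp1-hp0)*hp0)| ≤ K :=
    coefBound _ _ _ _ hc1 hc3 (by linarith) (hd2' _ hhp0b)
  -- assembly
  rw [abs_mul, abs_of_nonneg hPx]
  have habs4 : ∀ a b c d : ℝ, |a + b + c + d| ≤ |a| + |b| + |c| + |d| := by
    intro a b c d
    calc |a + b + c + d| ≤ |a + b + c| + |d| := abs_add_le _ _
      _ ≤ (|a + b| + |c|) + |d| := by gcongr; exact abs_add_le _ _
      _ ≤ ((|a| + |b|) + |c|) + |d| := by gcongr; exact abs_add_le _ _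
  have hE1 : |((p1*v1+p0*v0) - hv1*(p1-p0)) / (hp1-hp0) * (hp1-p1)
      + (-(p1*v1+p0*v0) - hv0*(p1-p0)) / (hp1-hp0) * (hp0-p0)
      + (p1*(hp1*hv1+hp0*hv0) - p1*hv1*(p1-p0)) / (hv1*(hp1-hp0)) * (hv1-v1)
      + (-p0*(hp1*hv1+hp0*hv0) - p0*hv0*(p1-p0)) / (hv0*(hp1-hp0)) * (hv0-v0)|
      ≤ K * (|hp1 - p1| + |hp0 - p0| + |hv1 - v1| + |hv0 - v0|) := by
    calc _ ≤ _ := habs4 _ _ _ _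
      _ ≤ K * |hp1-p1| + K * |hp0-p0| + K * |hv1-v1| + K * |hv0-v0| := by
          simp only [abs_mul]
          refine add_le_add (add_le_add (add_le_add ?_ ?_) ?_) ?_
          · exact mul_le_mul_of_nonneg_right hA1 (abs_nonneg _)
          · exact mul_le_mul_of_nonneg_right hA0 (abs_nonneg _)
          · exact mul_le_mul_of_nonneg_right hB1 (abs_nonneg _)
          · exact mul_le_mul_of_nonneg_right hB0 (abs_nonneg _)
      _ = _ := by ring
  have hE2 : |(-(hp1*hv1+hp0*hv0)*v1) / ((hp1-hp0)*hv1*hp1)| * |hp1-p1| ≤ K * |hp1 - p1| :=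
    mul_le_mul_of_nonneg_right hC (abs_nonneg _)
  have hE3 : |((hp1*hv1+hp0*hv0)*v0) / ((hp1-hp0)*hv0*hv1) * (hv1-v1)
      + (-(hp1*hv1+hp0*hv0)*v1) / ((hp1-hp0)*hv0*hv1) * (hv0-v0)|
      ≤ K * (|hv1 - v1| + |hv0 - v0|) := by
    calc _ ≤ _ := abs_add_le _ _
      _ ≤ K * |hv1-v1| + K * |hv0-v0| := by
          simp only [abs_mul]
          refine add_le_add ?_ ?_
          · exact mul_le_mul_of_nonneg_right hD1 (abs_nonneg _)
          · exact mul_le_mul_of_nonneg_right hD0 (abs_nonneg _)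
      _ = _ := by ring
  have hE4 : |(-(hp1*hv1+hp0*hv0)*p1) / ((hp1-hp0)*hv1*hp1) * (hv1-v1)
      + ((hp1*hv1+hp0*hv0)*p0) / ((hp1-hp0)*hv0*hp0) * (hv0-v0)
      + (-(hp1*hv1+hp0*hv0)) / ((hp1-hp0)*hp1) * (hp1-p1)
      + (hp1*hv1+hp0*hv0) / ((hp1-hp0)*hp0) * (hp0-p0)|
      ≤ K * (|hv1 - v1| + |hv0 - v0| + |hp1 - p1| + |hp0 - p0|) := by
    calc _ ≤ _ := habs4 _ _ _ _
      _ ≤ K * |hv1-v1| + K * |hv0-v0| + K * |hp1-p1| + K * |hp0-p0| := by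
          simp only [abs_mul]
          refine add_le_add (add_le_add (add_le_add ?_ ?_) ?_) ?_
          · exact mul_le_mul_of_nonneg_right hF1 (abs_nonneg _)
          · exact mul_le_mul_of_nonneg_right hF0 (abs_nonneg _)
          · exact mul_le_mul_of_nonneg_right hG1 (abs_nonneg _)
          · exact mul_le_mul_of_nonneg_right hG0 (abs_nonneg _)
      _ = _ := by ring
  calc Px * |_| ≤ Px * (|Dd| * (K * (|hp1 - p1| + |hp0 - p0| + |hv1 - v1| + |hv0 - v0|))
        + |Df| * (K * |hp1 - p1|) + |Dw| * (K * (|hv1 - v1| + |hv0 - v0|))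
        + |De| * (K * (|hv1 - v1| + |hv0 - v0| + |hp1 - p1| + |hp0 - p0|))) := by
        refine mul_le_mul_of_nonneg_left ?_ hPx
        calc _ ≤ _ := habs4 _ _ _ _
          _ ≤ _ := by
              simp only [abs_mul]
              refine add_le_add (add_le_add (add_le_add ?_ ?_) ?_) ?_
              · exact mul_le_mul_of_nonneg_left hE1 (abs_nonneg _)
              · exact mul_le_mul_of_nonneg_left hE2 (abs_nonneg _)
              · exact mul_le_mul_of_nonneg_left hE3 (abs_nonneg _)
              · exact mul_le_mul_of_nonneg_left hE4 (abs_nonneg _)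
    _ = _ := by ring

section helpers
variable {Ω : Type*} [MeasurableSpace Ω] {P : MeasureTheory.Measure Ω}

lemma prb_add [IsFiniteMeasure P] {s t u : Set Ω} (ht : MeasurableSet t)
    (hdisj : Disjoint s t) (huv : u = s ∪ t) : prb P u = prb P s + prb P t := by
  rw [huv]; unfold prb
  rw [measure_union hdisj ht, ENNReal.toReal_add (measure_ne_top _ _) (measure_ne_top _ _)]

lemma int_add {Y : Ω → ℝ} {s t u : Set Ω} (ht : MeasurableSet t) (hdisj : Disjoint s t)
    (huv : u = s ∪ t) (h1 : IntegrableOn Y s P) (h2 : IntegrableOn Y t P) :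
    ∫ ω in u, Y ω ∂P = ∫ ω in s, Y ω ∂P + ∫ ω in t, Y ω ∂P := by
  rw [huv]; exact setIntegral_union hdisj ht h1 h2

lemma cell_eval [IsFiniteMeasure P] {s : Set Ω} (hs : MeasurableSet s) {Y : Ω → ℝ}
    (hYs : IntegrableOn Y s P) (c d : ℝ) {g : Ω → ℝ}
    (hg : ∀ ω ∈ s, g ω = c + d * Y ω) :
    ∫ ω in s, g ω ∂P = c * prb P s + d * ∫ ω in s, Y ω ∂P := by
  rw [setIntegral_congr_fun hs (fun ω hω => hg ω hω)]
  rw [integral_add (integrableOn_const (μ := P) (s := s) (C := c) (measure_lt_top _ _).ne) (hYs.const_mul d)]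
  rw [setIntegral_const, integral_const_mul, smul_eq_mul]
  unfold prb; rw [Measure.real]; ring

lemma meas_cell {𝒳 : Type*} [MeasurableSpace 𝒳] [MeasurableSingletonClass 𝒳]
    {A Z : Ω → Bool} {X : Ω → 𝒳} (hA : Measurable A) (hZ : Measurable Z) (hX : Measurable X)
    (a z : Bool) (x : 𝒳) : MeasurableSet {ω | A ω = a ∧ Z ω = z ∧ X ω = x} := by
  have : {ω | A ω = a ∧ Z ω = z ∧ X ω = x}
      = A ⁻¹' {a} ∩ (Z ⁻¹' {z} ∩ X ⁻¹' {x}) := by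
    ext ω; simp [Set.mem_preimage]
  rw [this]
  exact (hA (measurableSet_singleton _)).inter
    ((hZ (measurableSet_singleton _)).inter (hX (measurableSet_singleton _)))

lemma integral_partition {𝒳 : Type*} [Fintype 𝒳] [MeasurableSpace 𝒳]
    [MeasurableSingletonClass 𝒳] [IsFiniteMeasure P]
    {A Z : Ω → Bool} {X : Ω → 𝒳} (hA : Measurable A) (hZ : Measurable Z) (hX : Measurable X)
    (g : Ω → ℝ) (hg : Integrable g P) :
    ∫ ω, g ω ∂P
      = ∑ x : 𝒳, ∑ a : Bool, ∑ z : Bool,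
          ∫ ω in {ω | A ω = a ∧ Z ω = z ∧ X ω = x}, g ω ∂P := by
  classical
  set s : 𝒳 × Bool × Bool → Set Ω :=
    fun t => {ω | A ω = t.2.1 ∧ Z ω = t.2.2 ∧ X ω = t.1} with hs
  have hmeas : ∀ t, MeasurableSet (s t) := fun t => meas_cell hA hZ hX _ _ _
  have hdisj : Pairwise (Function.onFun Disjoint s) := by
    intro t t' htt'
    rw [Function.onFun, Set.disjoint_left]
    rintro ω ⟨h1, h2, h3⟩ ⟨h1', h2', h3'⟩
    exact htt' (by ext <;> simp_all)
  have huniv : (⋃ t, s t) = Set.univ := by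
    ext ω
    simp only [Set.mem_iUnion, Set.mem_univ, iff_true]
    exact ⟨(X ω, A ω, Z ω), rfl, rfl, rfl⟩
  have h1 : ∫ ω, g ω ∂P = ∫ ω in ⋃ t, s t, g ω ∂P := by
    rw [huniv, Measure.restrict_univ]
  rw [h1, integral_iUnion hmeas hdisj (huniv ▸ hg.integrableOn), tsum_fintype,
    Fintype.sum_prod_type]
  apply Finset.sum_congr rfl
  intro x _
  rw [Fintype.sum_prod_type]

lemma csw {𝒳 : Type*} [Fintype 𝒳] (Px u v : 𝒳 → ℝ) (hP : ∀ x, 0 ≤ Px x) :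
    ∑ x, Px x * (|u x| * |v x|)
      ≤ Real.sqrt (∑ x, Px x * (u x) ^ 2) * Real.sqrt (∑ x, Px x * (v x) ^ 2) := by
  have key := Finset.sum_mul_sq_le_sq_mul_sq Finset.univ
    (fun x => Real.sqrt (Px x) * |u x|) (fun x => Real.sqrt (Px x) * |v x|)
  have h1 : ∀ x : 𝒳, (Real.sqrt (Px x) * |u x|) * (Real.sqrt (Px x) * |v x|)
      = Px x * (|u x| * |v x|) := by
    intro x
    rw [show (Real.sqrt (Px x) * |u x|) * (Real.sqrt (Px x) * |v x|)
        = (Real.sqrt (Px x) * Real.sqrt (Px x)) * (|u x| * |v x|) by ring,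
      Real.mul_self_sqrt (hP x)]
  have h2 : ∀ (w : 𝒳 → ℝ) (x : 𝒳), (Real.sqrt (Px x) * |w x|) ^ 2 = Px x * (w x) ^ 2 := by
    intro w x
    rw [mul_pow, Real.sq_sqrt (hP x), sq_abs]
  simp only [h1, h2] at key
  have hnn : 0 ≤ ∑ x, Px x * (|u x| * |v x|) :=
    Finset.sum_nonneg fun x _ => mul_nonneg (hP x) (mul_nonneg (abs_nonneg _) (abs_nonneg _))
  have := Real.sqrt_le_sqrt key
  rwa [Real.sqrt_sq hnn, Real.sqrt_mul (Finset.sum_nonneg fun x _ =>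
    mul_nonneg (hP x) (sq_nonneg _))] at this

lemma erels (p1 p0 v1 v0 e1 e0 f dl rho w Px : ℝ) (hPx : Px ≠ 0) (hDp : p1 - p0 ≠ 0)
    (hsum : v1 + v0 = 1) (hrho : rho = p1 * v1 + p0 * v0)
    (hdl : dl = (e1 - e0) / (p1 - p0) - f / (p1 - p0))
    (hwPx : w * Px = (e1 * (v1 * Px) + e0 * (v0 * Px)) - dl * (rho * Px) - f * (v1 * Px)) :
    e1 = p1 * dl + f + w ∧ e0 = p0 * dl + w := by
  have h1 : dl * (p1 - p0) = e1 - e0 - f := by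
    rw [hdl]; field_simp
  have h2' : w * Px = (e1 * v1 + e0 * v0 - dl * rho - f * v1) * Px := by
    linear_combination hwPx
  have h2 : w = e1 * v1 + e0 * v0 - dl * rho - f * v1 := mul_right_cancel₀ hPx h2'
  have hv0 : v0 = 1 - v1 := by linarith
  subst hv0
  subst hrho
  constructor
  · linear_combination (v1 - 1) * h1 - h2
  · linear_combination (-1) * h2 + v1 * h1

lemma comp_bdd {𝒳 : Type*} [Fintype 𝒳] (F : Bool → Bool → 𝒳 → ℝ) :
    ∃ C : ℝ, ∀ (a z : Bool) (x : 𝒳), |F a z x| ≤ C := by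
  classical
  refine ⟨∑ t : Bool × Bool × 𝒳, |F t.1 t.2.1 t.2.2|, fun a z x => ?_⟩
  exact Finset.single_le_sum (f := fun t : Bool × Bool × 𝒳 => |F t.1 t.2.1 t.2.2|)
    (fun t _ => abs_nonneg _) (Finset.mem_univ (a, z, x))

lemma comp_meas {Ω 𝒳 : Type*} [MeasurableSpace Ω] [Countable 𝒳] [MeasurableSpace 𝒳]
    [MeasurableSingletonClass 𝒳] {A Z : Ω → Bool} {X : Ω → 𝒳}
    (hA : Measurable A) (hZ : Measurable Z) (hX : Measurable X) (F : Bool → Bool → 𝒳 → ℝ) :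
    Measurable (fun ω => F (A ω) (Z ω) (X ω)) := by
  have h : Measurable (fun t : Bool × Bool × 𝒳 => F t.1 t.2.1 t.2.2) :=
    measurable_of_countable _
  exact h.comp (hA.prodMk (hZ.prodMk hX))

lemma int_comp {Ω 𝒳 : Type*} [MeasurableSpace Ω] {P : Measure Ω} [IsFiniteMeasure P]
    [Fintype 𝒳] [MeasurableSpace 𝒳] [MeasurableSingletonClass 𝒳]
    {A Z : Ω → Bool} {X : Ω → 𝒳}
    (hA : Measurable A) (hZ : Measurable Z) (hX : Measurable X) (F : Bool → Bool → 𝒳 → ℝ) :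
    Integrable (fun ω => F (A ω) (Z ω) (X ω)) P := by
  obtain ⟨C, hC⟩ := comp_bdd F
  refine Integrable.mono' (integrable_const C) (comp_meas hA hZ hX F).aestronglyMeasurable ?_
  exact ae_of_all _ fun ω => by simpa [Real.norm_eq_abs] using hC (A ω) (Z ω) (X ω)

end helpers

/-- Second-order bias bound for the plug-in influence function:
the bias `|E[M̂ − M]|` is bounded by a constant times a sum of cross-products of
the nuisance estimation errors. -/
theorem second_order_bias_bound
    {Ω 𝒳 : Type*} [MeasurableSpace Ω]
    [Fintype 𝒳] [MeasurableSpace 𝒳] [MeasurableSingletonClass 𝒳]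
    (P : Measure Ω) [IsProbabilityMeasure P]
    (Y : Ω → ℝ) (A Z : Ω → Bool) (X : Ω → 𝒳)
    (hY : Measurable Y) (hA : Measurable A) (hZ : Measurable Z) (hX : Measurable X)
    -- constants
    (c1 c2 c3 : ℝ) (hc1 : 0 < c1) (hc1' : c1 < 1/2) (hc2 : 0 < c2) (hc3 : 0 < c3)
    -- bounded outcome
    (hYbd : ∀ᵐ ω ∂P, |Y ω| ≤ c2)
    -- positivity
    (hXpos : ∀ x, 0 < prb P {ω | X ω = x})
    (hApos : 0 < prb P {ω | A ω = true})
    -- true nuisance functions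
    (p π : Bool → 𝒳 → ℝ)
    (hp : ∀ z x, p z x = cprb P {ω | A ω = true} {ω | Z ω = z ∧ X ω = x})
    (hπ : ∀ z x, π z x = cprb P {ω | Z ω = z} {ω | X ω = x})
    (hpbd : ∀ z x, p z x ∈ Set.Icc c1 (1 - c1))
    (hπbd : ∀ z x, π z x ∈ Set.Icc c1 (1 - c1))
    (hrel : ∀ x, c3 ≤ |p true x - p false x|)
    (e : Bool → 𝒳 → ℝ)
    (he : ∀ z x, e z x = cex P Y {ω | Z ω = z ∧ X ω = x})
    (e1z : Bool → 𝒳 → ℝ)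
    (he1z : ∀ z x, e1z z x = cex P Y {ω | A ω = true ∧ Z ω = z ∧ X ω = x})
    (ρ : 𝒳 → ℝ) (hρ : ∀ x, ρ x = cprb P {ω | A ω = true} {ω | X ω = x})
    (φ : 𝒳 → ℝ) (hφ : ∀ x, φ x = e1z true x - e1z false x)
    (δs : 𝒳 → ℝ)
    (hδs : ∀ x, δs x = (e true x - e false x) / (p true x - p false x)
      - φ x / (p true x - p false x))
    (w : 𝒳 → ℝ)
    (hw : ∀ x, w x = cex P (fun ω => Y ω - b2r (A ω) * δs (X ω) - b2r (Z ω) * φ (X ω))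
      {ω | X ω = x})
    (θ : Ω → ℝ)
    (hθ : ∀ ω, θ ω =
      ρ (X ω) / (p true (X ω) - p false (X ω)) * ((2 * b2r (Z ω) - 1) / π (Z ω) (X ω))
        * (Y ω - b2r (A ω) * δs (X ω) - b2r (Z ω) * φ (X ω) - w (X ω)
            - b2r (A ω) / p (Z ω) (X ω)
              * (Y ω - b2r (Z ω) * φ (X ω) - e1z false (X ω)))) :
    ∃ C : ℝ, 0 < C ∧
      ∀ (ph πh : Bool → 𝒳 → ℝ) (e11h e10h wh dh : 𝒳 → ℝ),
        (∀ z x, ph z x ∈ Set.Icc c1 (1 - c1)) →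
        (∀ z x, πh z x ∈ Set.Icc c1 (1 - c1)) →
        (∀ x, e11h x ∈ Set.Icc (-c2) c2) →
        (∀ x, e10h x ∈ Set.Icc (-c2) c2) →
        (∀ x, wh x ∈ Set.Icc (-c2) c2) →
        (∀ x, dh x ∈ Set.Icc (-c2) c2) →
        (∀ x, c3 ≤ |ph true x - ph false x|) →
        ∀ (φh ρh : 𝒳 → ℝ),
          (∀ x, φh x = e11h x - e10h x) →
          (∀ x, ρh x = ph true x * πh true x + ph false x * πh false x) →
        ∀ (θh : Ω → ℝ),
          (∀ ω, θh ω =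
            ρh (X ω) / (ph true (X ω) - ph false (X ω))
              * ((2 * b2r (Z ω) - 1) / πh (Z ω) (X ω))
              * (Y ω - b2r (A ω) * dh (X ω) - b2r (Z ω) * φh (X ω) - wh (X ω)
                  - b2r (A ω) / ph (Z ω) (X ω)
                    * (Y ω - b2r (Z ω) * φh (X ω) - e10h (X ω)))) →
        ∀ (rp1 rp0 rπ1 rπ0 rφ rw re10 rδ : ℝ),
          rp1 = Real.sqrt (∫ ω, (ph true (X ω) - p true (X ω)) ^ 2 ∂P) →
          rp0 = Real.sqrt (∫ ω, (ph false (X ω) - p false (X ω)) ^ 2 ∂P) →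
          rπ1 = Real.sqrt (∫ ω, (πh true (X ω) - π true (X ω)) ^ 2 ∂P) →
          rπ0 = Real.sqrt (∫ ω, (πh false (X ω) - π false (X ω)) ^ 2 ∂P) →
          rφ = Real.sqrt (∫ ω, (φh (X ω) - φ (X ω)) ^ 2 ∂P) →
          rw = Real.sqrt (∫ ω, (wh (X ω) - w (X ω)) ^ 2 ∂P) →
          re10 = Real.sqrt (∫ ω, (e10h (X ω) - e1z false (X ω)) ^ 2 ∂P) →
          rδ = Real.sqrt (∫ ω, (dh (X ω) - δs (X ω)) ^ 2 ∂P) →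
          |∫ ω, ((b2r (A ω) * dh (X ω) + θh ω) - (b2r (A ω) * δs (X ω) + θ ω)) ∂P|
            ≤ C * (rδ * (rp1 + rp0 + rπ1 + rπ0) + rφ * rp1 + rw * (rπ1 + rπ0)
                + re10 * (rπ1 + rπ0 + rp1 + rp0)) := by
  classical
  have hKpos : (0:ℝ) < 4 / (c3 * c1 * c1) := by positivity
  refine ⟨4 / (c3 * c1 * c1), hKpos, ?_⟩
  intro ph πh e11h e10h wh dh hphb hπhb he11hb he10hb hwhb hdhb hrelh φh ρh hφh hρh θh hθh
    rp1 rp0 rπ1 rπ0 rφ rwv re10 rδ hrp1 hrp0 hrπ1 hrπ0 hrφ hrwv hre10 hrδ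
  have hYint : Integrable Y P := by
    refine Integrable.mono' (integrable_const c2) hY.aestronglyMeasurable ?_
    filter_upwards [hYbd] with ω h
    simpa [Real.norm_eq_abs] using h
  have msC : ∀ (a z : Bool) (x : 𝒳), MeasurableSet {ω | A ω = a ∧ Z ω = z ∧ X ω = x} :=
    fun a z x => meas_cell hA hZ hX a z x
  have msZX : ∀ (z : Bool) (x : 𝒳), MeasurableSet {ω | Z ω = z ∧ X ω = x} := by
    intro z x
    have h : {ω | Z ω = z ∧ X ω = x} = Z ⁻¹' {z} ∩ X ⁻¹' {x} := by
      ext ω; simp [Set.mem_preimage]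
    rw [h]
    exact (hZ (measurableSet_singleton _)).inter (hX (measurableSet_singleton _))
  have hsetA : ∀ (z : Bool) (x : 𝒳), {ω | Z ω = z ∧ X ω = x}
      = {ω | A ω = true ∧ Z ω = z ∧ X ω = x} ∪ {ω | A ω = false ∧ Z ω = z ∧ X ω = x} := by
    intro z x; ext ω
    simp only [Set.mem_setOf_eq, Set.mem_union]
    cases hAω : A ω <;> simp [hAω]
  have hdisjA : ∀ (z : Bool) (x : 𝒳), Disjoint {ω | A ω = true ∧ Z ω = z ∧ X ω = x}
      {ω | A ω = false ∧ Z ω = z ∧ X ω = x} := by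
    intro z x
    rw [Set.disjoint_left]
    rintro ω ⟨h1, -, -⟩ ⟨h2, -, -⟩
    simp [h1] at h2
  have hsetZ : ∀ x : 𝒳, {ω | X ω = x}
      = {ω | Z ω = true ∧ X ω = x} ∪ {ω | Z ω = false ∧ X ω = x} := by
    intro x; ext ω
    simp only [Set.mem_setOf_eq, Set.mem_union]
    cases hZω : Z ω <;> simp [hZω]
  have hdisjZ : ∀ x : 𝒳, Disjoint {ω | Z ω = true ∧ X ω = x} {ω | Z ω = false ∧ X ω = x} := by
    intro x
    rw [Set.disjoint_left]
    rintro ω ⟨h1, -⟩ ⟨h2, -⟩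
    simp [h1] at h2
  have hsetAX : ∀ x : 𝒳, {ω | A ω = true} ∩ {ω | X ω = x}
      = {ω | A ω = true ∧ Z ω = true ∧ X ω = x} ∪ {ω | A ω = true ∧ Z ω = false ∧ X ω = x} := by
    intro x; ext ω
    simp only [Set.mem_inter_iff, Set.mem_setOf_eq, Set.mem_union]
    cases hZω : Z ω <;> simp [hZω] <;> tauto
  have hdisjAX : ∀ x : 𝒳, Disjoint {ω | A ω = true ∧ Z ω = true ∧ X ω = x}
      {ω | A ω = true ∧ Z ω = false ∧ X ω = x} := by
    intro x
    rw [Set.disjoint_left]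
    rintro ω ⟨-, h1, -⟩ ⟨-, h2, -⟩
    simp [h1] at h2
  have hq_split : ∀ (z : Bool) (x : 𝒳), prb P {ω | Z ω = z ∧ X ω = x}
      = prb P {ω | A ω = true ∧ Z ω = z ∧ X ω = x}
        + prb P {ω | A ω = false ∧ Z ω = z ∧ X ω = x} :=
    fun z x => prb_add (msC false z x) (hdisjA z x) (hsetA z x)
  have hm_split : ∀ (z : Bool) (x : 𝒳), (∫ ω in {ω | Z ω = z ∧ X ω = x}, Y ω ∂P)
      = (∫ ω in {ω | A ω = true ∧ Z ω = z ∧ X ω = x}, Y ω ∂P)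
        + ∫ ω in {ω | A ω = false ∧ Z ω = z ∧ X ω = x}, Y ω ∂P :=
    fun z x => int_add (msC false z x) (hdisjA z x) (hsetA z x)
      hYint.integrableOn hYint.integrableOn
  have hPx_split : ∀ x : 𝒳, prb P {ω | X ω = x}
      = prb P {ω | Z ω = true ∧ X ω = x} + prb P {ω | Z ω = false ∧ X ω = x} :=
    fun x => prb_add (msZX false x) (hdisjZ x) (hsetZ x)
  have hρ_split : ∀ x : 𝒳, prb P ({ω | A ω = true} ∩ {ω | X ω = x})
      = prb P {ω | A ω = true ∧ Z ω = true ∧ X ω = x}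
        + prb P {ω | A ω = true ∧ Z ω = false ∧ X ω = x} :=
    fun x => prb_add (msC true false x) (hdisjAX x) (hsetAX x)
  have hPxpos : ∀ x, 0 < prb P {ω | X ω = x} := hXpos
  have hPZX : ∀ (z : Bool) (x : 𝒳), prb P {ω | Z ω = z ∧ X ω = x}
      = π z x * prb P {ω | X ω = x} := by
    intro z x
    have hset : {ω | Z ω = z} ∩ {ω | X ω = x} = {ω | Z ω = z ∧ X ω = x} := rfl
    rw [hπ z x, cprb, hset]
    exact (div_mul_cancel₀ _ (hXpos x).ne').symm
  have hPZXpos : ∀ (z : Bool) (x : 𝒳), 0 < prb P {ω | Z ω = z ∧ X ω = x} := by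
    intro z x
    rw [hPZX z x]
    exact mul_pos (lt_of_lt_of_le hc1 (hπbd z x).1) (hPxpos x)
  have hq1 : ∀ (z : Bool) (x : 𝒳), prb P {ω | A ω = true ∧ Z ω = z ∧ X ω = x}
      = p z x * (π z x * prb P {ω | X ω = x}) := by
    intro z x
    have hset : {ω | A ω = true} ∩ {ω | Z ω = z ∧ X ω = x}
        = {ω | A ω = true ∧ Z ω = z ∧ X ω = x} := rfl
    have h := hp z x
    rw [cprb, hset] at h
    calc prb P {ω | A ω = true ∧ Z ω = z ∧ X ω = x}
        = prb P {ω | A ω = true ∧ Z ω = z ∧ X ω = x} / prb P {ω | Z ω = z ∧ X ω = x}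
          * prb P {ω | Z ω = z ∧ X ω = x} := by
            field_simp [(hPZXpos z x).ne']
      _ = p z x * (π z x * prb P {ω | X ω = x}) := by rw [← h, hPZX z x]
  have hq1pos : ∀ (z : Bool) (x : 𝒳), 0 < prb P {ω | A ω = true ∧ Z ω = z ∧ X ω = x} := by
    intro z x
    rw [hq1 z x]
    exact mul_pos (lt_of_lt_of_le hc1 (hpbd z x).1)
      (mul_pos (lt_of_lt_of_le hc1 (hπbd z x).1) (hPxpos x))
  have hq0 : ∀ (z : Bool) (x : 𝒳), prb P {ω | A ω = false ∧ Z ω = z ∧ X ω = x}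
      = (1 - p z x) * (π z x * prb P {ω | X ω = x}) := by
    intro z x
    have h := hq_split z x
    rw [hPZX z x, hq1 z x] at h
    linear_combination -h
  have hm1 : ∀ (z : Bool) (x : 𝒳), (∫ ω in {ω | A ω = true ∧ Z ω = z ∧ X ω = x}, Y ω ∂P)
      = e1z z x * prb P {ω | A ω = true ∧ Z ω = z ∧ X ω = x} := by
    intro z x
    have h := he1z z x
    rw [cex] at h
    rw [h]
    field_simp [(hq1pos z x).ne']
  have hmZX : ∀ (z : Bool) (x : 𝒳), (∫ ω in {ω | Z ω = z ∧ X ω = x}, Y ω ∂P)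
      = e z x * (π z x * prb P {ω | X ω = x}) := by
    intro z x
    have h := he z x
    rw [cex] at h
    rw [h, ← hPZX z x]
    field_simp [(hPZXpos z x).ne']
  have hm0 : ∀ (z : Bool) (x : 𝒳), (∫ ω in {ω | A ω = false ∧ Z ω = z ∧ X ω = x}, Y ω ∂P)
      = (e z x - p z x * e1z z x) * (π z x * prb P {ω | X ω = x}) := by
    intro z x
    have h := hm_split z x
    rw [hmZX z x, hm1 z x, hq1 z x] at h
    linear_combination -h
  have hsumπ : ∀ x : 𝒳, π true x + π false x = 1 := by
    intro x
    have h := hPx_split x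
    rw [hPZX true x, hPZX false x] at h
    have h2 : (π true x + π false x) * prb P {ω | X ω = x} = 1 * prb P {ω | X ω = x} := by
      linear_combination -h
    exact mul_right_cancel₀ (hPxpos x).ne' h2
  have hρPx : ∀ x : 𝒳, ρ x * prb P {ω | X ω = x}
      = prb P {ω | A ω = true ∧ Z ω = true ∧ X ω = x}
        + prb P {ω | A ω = true ∧ Z ω = false ∧ X ω = x} := by
    intro x
    have h := hρ x
    rw [cprb, hρ_split x] at h
    rw [h]
    exact div_mul_cancel₀ _ (hXpos x).ne'
  have hρrel : ∀ x : 𝒳, ρ x = p true x * π true x + p false x * π false x := by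
    intro x
    have h := hρPx x
    rw [hq1 true x, hq1 false x] at h
    have h2 : ρ x * prb P {ω | X ω = x}
        = (p true x * π true x + p false x * π false x) * prb P {ω | X ω = x} := by
      linear_combination h
    exact mul_right_cancel₀ (hPxpos x).ne' h2
  have hg0int : Integrable (fun ω => Y ω - b2r (A ω) * δs (X ω) - b2r (Z ω) * φ (X ω)) P := by
    have h1 : Integrable (fun ω => b2r (A ω) * δs (X ω) + b2r (Z ω) * φ (X ω)) P :=
      int_comp hA hZ hX (fun a z x => b2r a * δs x + b2r z * φ x)
    refine (hYint.sub h1).congr (ae_of_all _ fun ω => ?_)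
    simp only [Pi.sub_apply]
    ring
  have hwPx : ∀ x : 𝒳, w x * prb P {ω | X ω = x}
      = (e true x * (π true x * prb P {ω | X ω = x})
          + e false x * (π false x * prb P {ω | X ω = x}))
        - δs x * (ρ x * prb P {ω | X ω = x}) - φ x * (π true x * prb P {ω | X ω = x}) := by
    intro x
    have hC : ∀ (a z : Bool), (∫ ω in {ω | A ω = a ∧ Z ω = z ∧ X ω = x},
        (Y ω - b2r (A ω) * δs (X ω) - b2r (Z ω) * φ (X ω)) ∂P)
        = (-(b2r a * δs x + b2r z * φ x)) * prb P {ω | A ω = a ∧ Z ω = z ∧ X ω = x}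
          + 1 * ∫ ω in {ω | A ω = a ∧ Z ω = z ∧ X ω = x}, Y ω ∂P := by
      intro a z
      refine cell_eval (msC a z x) hYint.integrableOn _ _ ?_
      rintro ω ⟨ha, hz, hx⟩
      rw [ha, hz, hx]; ring
    have hw2 : w x * prb P {ω | X ω = x}
        = ∫ ω in {ω | X ω = x}, (Y ω - b2r (A ω) * δs (X ω) - b2r (Z ω) * φ (X ω)) ∂P := by
      have h := hw x
      rw [cex] at h
      rw [h]
      exact div_mul_cancel₀ _ (hXpos x).ne'
    have hs1 : (∫ ω in {ω | X ω = x}, (Y ω - b2r (A ω) * δs (X ω) - b2r (Z ω) * φ (X ω)) ∂P)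
        = (∫ ω in {ω | Z ω = true ∧ X ω = x},
            (Y ω - b2r (A ω) * δs (X ω) - b2r (Z ω) * φ (X ω)) ∂P)
          + ∫ ω in {ω | Z ω = false ∧ X ω = x},
            (Y ω - b2r (A ω) * δs (X ω) - b2r (Z ω) * φ (X ω)) ∂P :=
      int_add (msZX false x) (hdisjZ x) (hsetZ x) hg0int.integrableOn hg0int.integrableOn
    have hs2 : ∀ z : Bool, (∫ ω in {ω | Z ω = z ∧ X ω = x},
        (Y ω - b2r (A ω) * δs (X ω) - b2r (Z ω) * φ (X ω)) ∂P)
        = (∫ ω in {ω | A ω = true ∧ Z ω = z ∧ X ω = x},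
            (Y ω - b2r (A ω) * δs (X ω) - b2r (Z ω) * φ (X ω)) ∂P)
          + ∫ ω in {ω | A ω = false ∧ Z ω = z ∧ X ω = x},
            (Y ω - b2r (A ω) * δs (X ω) - b2r (Z ω) * φ (X ω)) ∂P :=
      fun z => int_add (msC false z x) (hdisjA z x) (hsetA z x)
        hg0int.integrableOn hg0int.integrableOn
    rw [hs1, hs2 true, hs2 false, hC true true, hC false true, hC true false, hC false false]
      at hw2
    simp only [b2r] at hw2
    norm_num at hw2
    have hsM : ∀ z : Bool, (∫ ω in {ω | A ω = true ∧ Z ω = z ∧ X ω = x}, Y ω ∂P)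
        + (∫ ω in {ω | A ω = false ∧ Z ω = z ∧ X ω = x}, Y ω ∂P)
        = e z x * (π z x * prb P {ω | X ω = x}) := by
      intro z
      rw [← hm_split z x, hmZX z x]
    have hπ1Px : prb P {ω | A ω = true ∧ Z ω = true ∧ X ω = x}
        + prb P {ω | A ω = false ∧ Z ω = true ∧ X ω = x}
        = π true x * prb P {ω | X ω = x} := by
      rw [← hq_split true x, hPZX true x]
    linear_combination hw2 + hsM true + hsM false + δs x * hρPx x - φ x * hπ1Px
  have hΔp : ∀ x : 𝒳, p true x - p false x ≠ 0 :=
    fun x => abs_pos.mp (lt_of_lt_of_le hc3 (hrel x))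
  have herel : ∀ x : 𝒳, e true x = p true x * δs x + φ x + w x
      ∧ e false x = p false x * δs x + w x :=
    fun x => erels _ _ _ _ _ _ _ _ _ _ _ (hPxpos x).ne' (hΔp x) (hsumπ x) (hρrel x)
      (hδs x) (hwPx x)
  have he11rel : ∀ x : 𝒳, e1z true x = φ x + e1z false x := by
    intro x
    have := hφ x
    linarith
  set Fex : Bool → Bool → 𝒳 → ℝ := fun a z x =>
    b2r a * (dh x - δs x)
    + ρh x / (ph true x - ph false x) * ((2 * b2r z - 1) / πh z x)
      * (-(b2r a * dh x) - b2r z * φh x - wh x + b2r a / ph z x * (b2r z * φh x + e10h x))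
    - ρ x / (p true x - p false x) * ((2 * b2r z - 1) / π z x)
      * (-(b2r a * δs x) - b2r z * φ x - w x + b2r a / p z x * (b2r z * φ x + e1z false x))
    with hFex
  set Gex : Bool → Bool → 𝒳 → ℝ := fun a z x =>
    ρh x / (ph true x - ph false x) * ((2 * b2r z - 1) / πh z x) * (1 - b2r a / ph z x)
    - ρ x / (p true x - p false x) * ((2 * b2r z - 1) / π z x) * (1 - b2r a / p z x)
    with hGex
  have hpoint : ∀ ω, (b2r (A ω) * dh (X ω) + θh ω) - (b2r (A ω) * δs (X ω) + θ ω)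
      = Fex (A ω) (Z ω) (X ω) + Gex (A ω) (Z ω) (X ω) * Y ω := by
    intro ω
    simp only [hFex, hGex]
    rw [hθ ω, hθh ω]
    ring
  have hintg : Integrable (fun ω => (b2r (A ω) * dh (X ω) + θh ω)
      - (b2r (A ω) * δs (X ω) + θ ω)) P := by
    have h1 : (fun ω => (b2r (A ω) * dh (X ω) + θh ω) - (b2r (A ω) * δs (X ω) + θ ω))
        = fun ω => Fex (A ω) (Z ω) (X ω) + Gex (A ω) (Z ω) (X ω) * Y ω := funext hpoint
    rw [h1]
    refine (int_comp hA hZ hX Fex).add ?_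
    obtain ⟨C, hC⟩ := comp_bdd Gex
    refine hYint.bdd_mul (c := C) (comp_meas hA hZ hX Gex).aestronglyMeasurable ?_
    exact ae_of_all _ fun ω => by simpa [Real.norm_eq_abs] using hC (A ω) (Z ω) (X ω)
  have hcell : ∀ (a z : Bool) (x : 𝒳), (∫ ω in {ω | A ω = a ∧ Z ω = z ∧ X ω = x},
      ((b2r (A ω) * dh (X ω) + θh ω) - (b2r (A ω) * δs (X ω) + θ ω)) ∂P)
      = Fex a z x * prb P {ω | A ω = a ∧ Z ω = z ∧ X ω = x}
        + Gex a z x * ∫ ω in {ω | A ω = a ∧ Z ω = z ∧ X ω = x}, Y ω ∂P := by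
    intro a z x
    refine cell_eval (msC a z x) hYint.integrableOn _ _ ?_
    rintro ω ⟨ha, hz, hx⟩
    rw [hpoint ω, ha, hz, hx]
  have hmain : (∫ ω, ((b2r (A ω) * dh (X ω) + θh ω) - (b2r (A ω) * δs (X ω) + θ ω)) ∂P)
      = ∑ x : 𝒳, ∑ a : Bool, ∑ z : Bool,
          (Fex a z x * prb P {ω | A ω = a ∧ Z ω = z ∧ X ω = x}
            + Gex a z x * ∫ ω in {ω | A ω = a ∧ Z ω = z ∧ X ω = x}, Y ω ∂P) := by
    refine (integral_partition hA hZ hX _ hintg).trans ?_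
    exact Finset.sum_congr rfl fun x _ => Finset.sum_congr rfl fun a _ =>
      Finset.sum_congr rfl fun z _ => hcell a z x
  have hxbound : ∀ x : 𝒳,
      |∑ a : Bool, ∑ z : Bool, (Fex a z x * prb P {ω | A ω = a ∧ Z ω = z ∧ X ω = x}
        + Gex a z x * ∫ ω in {ω | A ω = a ∧ Z ω = z ∧ X ω = x}, Y ω ∂P)|
      ≤ 4 / (c3 * c1 * c1) * (prb P {ω | X ω = x}
          * (|dh x - δs x| * (|ph true x - p true x| + |ph false x - p false x|
              + |πh true x - π true x| + |πh false x - π false x|)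
            + |e11h x - e10h x - φ x| * |ph true x - p true x|
            + |wh x - w x| * (|πh true x - π true x| + |πh false x - π false x|)
            + |e10h x - e1z false x| * (|πh true x - π true x| + |πh false x - π false x|
              + |ph true x - p true x| + |ph false x - p false x|))) := by
    intro x
    have hiden : (∑ a : Bool, ∑ z : Bool,
        (Fex a z x * prb P {ω | A ω = a ∧ Z ω = z ∧ X ω = x}
          + Gex a z x * ∫ ω in {ω | A ω = a ∧ Z ω = z ∧ X ω = x}, Y ω ∂P))
        = (prb P {ω | X ω = x}) * ((dh x - δs x) * ((((p true x)*(π true x)+(p false x)*(π false x)) - (πh true x)*((p true x)-(p false x))) / ((ph true x)-(ph false x)) * ((ph true x)-(p true x)) + (-((p true x)*(π true x)+(p false x)*(π false x)) - (πh false x)*((p true x)-(p false x))) / ((ph true x)-(ph false x)) * ((ph false x)-(p false x)) + ((p true x)*((ph true x)*(πh true x)+(ph false x)*(πh false x)) - (p true x)*(πh true x)*((p true x)-(p false x))) / ((πh true x)*((ph true x)-(ph false x))) * ((πh true x)-(π true x)) + (-(p false x)*((ph true x)*(πh true x)+(ph false x)*(πh false x)) - (p false x)*(πh false x)*((p true x)-(p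 false x))) / ((πh false x)*((ph true x)-(ph false x))) * ((πh false x)-(π false x)))
    + (e11h x - e10h x - φ x) * ((-((ph true x)*(πh true x)+(ph false x)*(πh false x))*(π true x)) / (((ph true x)-(ph false x))*(πh true x)*(ph true x)) * ((ph true x)-(p true x)))
    + (wh x - w x) * ((((ph true x)*(πh true x)+(ph false x)*(πh false x))*(π false x)) / (((ph true x)-(ph false x))*(πh false x)*(πh true x)) * ((πh true x)-(π true x)) + (-((ph true x)*(πh true x)+(ph false x)*(πh false x))*(π true x)) / (((ph true x)-(ph false x))*(πh false x)*(πh true x)) * ((πh false x)-(π false x)))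
    + (e10h x - e1z false x) * ((-((ph true x)*(πh true x)+(ph false x)*(πh false x))*(p true x)) / (((ph true x)-(ph false x))*(πh true x)*(ph true x)) * ((πh true x)-(π true x)) + (((ph true x)*(πh true x)+(ph false x)*(πh false x))*(p false x)) / (((ph true x)-(ph false x))*(πh false x)*(ph false x)) * ((πh false x)-(π false x)) + (-((ph true x)*(πh true x)+(ph false x)*(πh false x))) / (((ph true x)-(ph false x))*(ph true x)) * ((ph true x)-(p true x)) + (((ph true x)*(πh true x)+(ph false x)*(πh false x))) / (((ph true x)-(ph false x))*(ph false x)) * ((ph false x)-(p false x)))) := by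
      simp only [Fintype.sum_bool, hFex, hGex]
      rw [hm1 true x, hm1 false x, hm0 true x, hm0 false x, hq1 true x, hq1 false x,
        hq0 true x, hq0 false x, (herel x).1, (herel x).2, he11rel x, hρrel x, hφh x, hρh x]
      simp only [b2r]
      norm_num
      linear_combination keyIdentity (p true x) (p false x) (π true x) (π false x)
        (δs x) (φ x) (w x) (e1z false x) (prb P {ω | X ω = x})
        (ph true x) (ph false x) (πh true x) (πh false x) (e11h x) (e10h x) (wh x) (dh x)
        (ne_of_gt (lt_of_lt_of_le hc1 (hpbd true x).1))
        (ne_of_gt (lt_of_lt_of_le hc1 (hpbd false x).1))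
        (ne_of_gt (lt_of_lt_of_le hc1 (hπbd true x).1))
        (ne_of_gt (lt_of_lt_of_le hc1 (hπbd false x).1))
        (hΔp x)
        (ne_of_gt (lt_of_lt_of_le hc1 (hphb true x).1))
        (ne_of_gt (lt_of_lt_of_le hc1 (hphb false x).1))
        (ne_of_gt (lt_of_lt_of_le hc1 (hπhb true x).1))
        (ne_of_gt (lt_of_lt_of_le hc1 (hπhb false x).1))
        (abs_pos.mp (lt_of_lt_of_le hc3 (hrelh x)))
    rw [hiden]
    exact boundLemma c1 c3 (p true x) (p false x) (π true x) (π false x)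
      (prb P {ω | X ω = x}) (ph true x) (ph false x) (πh true x) (πh false x)
      (dh x - δs x) (e11h x - e10h x - φ x) (wh x - w x) (e10h x - e1z false x)
      hc1 hc1' hc3 (hPxpos x).le
      (hpbd true x).1 (hpbd true x).2 (hpbd false x).1 (hpbd false x).2
      (hπbd true x).1 (hπbd true x).2 (hπbd false x).1 (hπbd false x).2
      (hphb true x).1 (hphb true x).2 (hphb false x).1 (hphb false x).2
      (hπhb true x).1 (hπhb true x).2 (hπhb false x).1 (hπhb false x).2
      (hrelh x)
  have hintX : ∀ h : 𝒳 → ℝ, (∫ ω, h (X ω) ∂P) = ∑ x : 𝒳, prb P {ω | X ω = x} * h x := by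
    intro h
    refine (integral_partition hA hZ hX _ (int_comp hA hZ hX (fun _ _ x => h x))).trans ?_
    refine Finset.sum_congr rfl fun x _ => ?_
    have hc : ∀ (a z : Bool), (∫ ω in {ω | A ω = a ∧ Z ω = z ∧ X ω = x}, h (X ω) ∂P)
        = h x * prb P {ω | A ω = a ∧ Z ω = z ∧ X ω = x}
          + 0 * ∫ ω in {ω | A ω = a ∧ Z ω = z ∧ X ω = x}, Y ω ∂P := by
      intro a z
      refine cell_eval (msC a z x) hYint.integrableOn _ _ ?_
      rintro ω ⟨-, -, hx⟩
      rw [hx]; ring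
    simp only [Fintype.sum_bool, hc]
    have hs : prb P {ω | X ω = x}
        = prb P {ω | A ω = true ∧ Z ω = true ∧ X ω = x}
          + prb P {ω | A ω = false ∧ Z ω = true ∧ X ω = x}
          + (prb P {ω | A ω = true ∧ Z ω = false ∧ X ω = x}
            + prb P {ω | A ω = false ∧ Z ω = false ∧ X ω = x}) := by
      rw [hPx_split x, hq_split true x, hq_split false x]
    linear_combination (-(h x)) * hs
  have hRδ : Real.sqrt (∑ x : 𝒳, prb P {ω | X ω = x} * (dh x - δs x) ^ 2) = rδ := by
    rw [hrδ]
    congr 1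
    exact (hintX fun x => (dh x - δs x) ^ 2).symm
  have hRp1 : Real.sqrt (∑ x : 𝒳, prb P {ω | X ω = x} * (ph true x - p true x) ^ 2) = rp1 := by
    rw [hrp1]
    congr 1
    exact (hintX fun x => (ph true x - p true x) ^ 2).symm
  have hRp0 : Real.sqrt (∑ x : 𝒳, prb P {ω | X ω = x} * (ph false x - p false x) ^ 2) = rp0 := by
    rw [hrp0]
    congr 1
    exact (hintX fun x => (ph false x - p false x) ^ 2).symm
  have hRπ1 : Real.sqrt (∑ x : 𝒳, prb P {ω | X ω = x} * (πh true x - π true x) ^ 2) = rπ1 := by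
    rw [hrπ1]
    congr 1
    exact (hintX fun x => (πh true x - π true x) ^ 2).symm
  have hRπ0 : Real.sqrt (∑ x : 𝒳, prb P {ω | X ω = x} * (πh false x - π false x) ^ 2) = rπ0 := by
    rw [hrπ0]
    congr 1
    exact (hintX fun x => (πh false x - π false x) ^ 2).symm
  have hRw : Real.sqrt (∑ x : 𝒳, prb P {ω | X ω = x} * (wh x - w x) ^ 2) = rwv := by
    rw [hrwv]
    congr 1
    exact (hintX fun x => (wh x - w x) ^ 2).symm
  have hRe10 : Real.sqrt (∑ x : 𝒳, prb P {ω | X ω = x} * (e10h x - e1z false x) ^ 2)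
      = re10 := by
    rw [hre10]
    congr 1
    exact (hintX fun x => (e10h x - e1z false x) ^ 2).symm
  have hRφ : Real.sqrt (∑ x : 𝒳, prb P {ω | X ω = x} * (e11h x - e10h x - φ x) ^ 2) = rφ := by
    rw [hrφ]
    congr 1
    refine ((hintX fun x => (φh x - φ x) ^ 2).trans ?_).symm
    exact Finset.sum_congr rfl fun x _ => by rw [hφh x]
  have hPle : ∀ x : 𝒳, 0 ≤ prb P {ω | X ω = x} := fun x => (hPxpos x).le
  have hcs1 : ∑ x : 𝒳, prb P {ω | X ω = x} * (|dh x - δs x| * |ph true x - p true x|)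
      ≤ rδ * rp1 := by
    have h := csw (fun x => prb P {ω | X ω = x}) (fun x => dh x - δs x)
      (fun x => ph true x - p true x) hPle
    rw [hRδ, hRp1] at h
    exact h
  have hcs2 : ∑ x : 𝒳, prb P {ω | X ω = x} * (|dh x - δs x| * |ph false x - p false x|)
      ≤ rδ * rp0 := by
    have h := csw (fun x => prb P {ω | X ω = x}) (fun x => dh x - δs x)
      (fun x => ph false x - p false x) hPle
    rw [hRδ, hRp0] at h
    exact h
  have hcs3 : ∑ x : 𝒳, prb P {ω | X ω = x} * (|dh x - δs x| * |πh true x - π true x|)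
      ≤ rδ * rπ1 := by
    have h := csw (fun x => prb P {ω | X ω = x}) (fun x => dh x - δs x)
      (fun x => πh true x - π true x) hPle
    rw [hRδ, hRπ1] at h
    exact h
  have hcs4 : ∑ x : 𝒳, prb P {ω | X ω = x} * (|dh x - δs x| * |πh false x - π false x|)
      ≤ rδ * rπ0 := by
    have h := csw (fun x => prb P {ω | X ω = x}) (fun x => dh x - δs x)
      (fun x => πh false x - π false x) hPle
    rw [hRδ, hRπ0] at h
    exact h
  have hcs5 : ∑ x : 𝒳, prb P {ω | X ω = x} * (|e11h x - e10h x - φ x| * |ph true x - p true x|)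
      ≤ rφ * rp1 := by
    have h := csw (fun x => prb P {ω | X ω = x}) (fun x => e11h x - e10h x - φ x)
      (fun x => ph true x - p true x) hPle
    rw [hRφ, hRp1] at h
    exact h
  have hcs6 : ∑ x : 𝒳, prb P {ω | X ω = x} * (|wh x - w x| * |πh true x - π true x|)
      ≤ rwv * rπ1 := by
    have h := csw (fun x => prb P {ω | X ω = x}) (fun x => wh x - w x)
      (fun x => πh true x - π true x) hPle
    rw [hRw, hRπ1] at h
    exact h
  have hcs7 : ∑ x : 𝒳, prb P {ω | X ω = x} * (|wh x - w x| * |πh false x - π false x|)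
      ≤ rwv * rπ0 := by
    have h := csw (fun x => prb P {ω | X ω = x}) (fun x => wh x - w x)
      (fun x => πh false x - π false x) hPle
    rw [hRw, hRπ0] at h
    exact h
  have hcs8 : ∑ x : 𝒳, prb P {ω | X ω = x} * (|e10h x - e1z false x| * |πh true x - π true x|)
      ≤ re10 * rπ1 := by
    have h := csw (fun x => prb P {ω | X ω = x}) (fun x => e10h x - e1z false x)
      (fun x => πh true x - π true x) hPle
    rw [hRe10, hRπ1] at h
    exact h
  have hcs9 : ∑ x : 𝒳, prb P {ω | X ω = x} * (|e10h x - e1z false x| * |πh false x - π false x|)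
      ≤ re10 * rπ0 := by
    have h := csw (fun x => prb P {ω | X ω = x}) (fun x => e10h x - e1z false x)
      (fun x => πh false x - π false x) hPle
    rw [hRe10, hRπ0] at h
    exact h
  have hcs10 : ∑ x : 𝒳, prb P {ω | X ω = x} * (|e10h x - e1z false x| * |ph true x - p true x|)
      ≤ re10 * rp1 := by
    have h := csw (fun x => prb P {ω | X ω = x}) (fun x => e10h x - e1z false x)
      (fun x => ph true x - p true x) hPle
    rw [hRe10, hRp1] at h
    exact h
  have hcs11 : ∑ x : 𝒳, prb P {ω | X ω = x} * (|e10h x - e1z false x| * |ph false x - p false x|)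
      ≤ re10 * rp0 := by
    have h := csw (fun x => prb P {ω | X ω = x}) (fun x => e10h x - e1z false x)
      (fun x => ph false x - p false x) hPle
    rw [hRe10, hRp0] at h
    exact h
  calc |∫ ω, ((b2r (A ω) * dh (X ω) + θh ω) - (b2r (A ω) * δs (X ω) + θ ω)) ∂P|
      = |∑ x : 𝒳, ∑ a : Bool, ∑ z : Bool,
          (Fex a z x * prb P {ω | A ω = a ∧ Z ω = z ∧ X ω = x}
            + Gex a z x * ∫ ω in {ω | A ω = a ∧ Z ω = z ∧ X ω = x}, Y ω ∂P)| := by rw [hmain]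
    _ ≤ ∑ x : 𝒳, |∑ a : Bool, ∑ z : Bool,
          (Fex a z x * prb P {ω | A ω = a ∧ Z ω = z ∧ X ω = x}
            + Gex a z x * ∫ ω in {ω | A ω = a ∧ Z ω = z ∧ X ω = x}, Y ω ∂P)| :=
        Finset.abs_sum_le_sum_abs _ _
    _ ≤ ∑ x : 𝒳, 4 / (c3 * c1 * c1) * (prb P {ω | X ω = x}
          * (|dh x - δs x| * (|ph true x - p true x| + |ph false x - p false x|
              + |πh true x - π true x| + |πh false x - π false x|)
            + |e11h x - e10h x - φ x| * |ph true x - p true x|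
            + |wh x - w x| * (|πh true x - π true x| + |πh false x - π false x|)
            + |e10h x - e1z false x| * (|πh true x - π true x| + |πh false x - π false x|
              + |ph true x - p true x| + |ph false x - p false x|))) :=
        Finset.sum_le_sum fun x _ => hxbound x
    _ = 4 / (c3 * c1 * c1) * ∑ x : 𝒳, (prb P {ω | X ω = x}
          * (|dh x - δs x| * (|ph true x - p true x| + |ph false x - p false x|
              + |πh true x - π true x| + |πh false x - π false x|)
            + |e11h x - e10h x - φ x| * |ph true x - p true x|
            + |wh x - w x| * (|πh true x - π true x| + |πh false x - π false x|)
            + |e10h x - e1z false x| * (|πh true x - π true x| + |πh false x - π false x|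
              + |ph true x - p true x| + |ph false x - p false x|))) := by
        rw [Finset.mul_sum]
    _ ≤ 4 / (c3 * c1 * c1) * (rδ * rp1 + rδ * rp0 + rδ * rπ1 + rδ * rπ0 + rφ * rp1
          + rwv * rπ1 + rwv * rπ0 + re10 * rπ1 + re10 * rπ0 + re10 * rp1 + re10 * rp0) := by
        refine mul_le_mul_of_nonneg_left ?_ hKpos.le
        have hexp : ∀ x : 𝒳, prb P {ω | X ω = x}
            * (|dh x - δs x| * (|ph true x - p true x| + |ph false x - p false x|
                + |πh true x - π true x| + |πh false x - π false x|)
              + |e11h x - e10h x - φ x| * |ph true x - p true x|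
              + |wh x - w x| * (|πh true x - π true x| + |πh false x - π false x|)
              + |e10h x - e1z false x| * (|πh true x - π true x| + |πh false x - π false x|
                + |ph true x - p true x| + |ph false x - p false x|))
            = prb P {ω | X ω = x} * (|dh x - δs x| * |ph true x - p true x|)
              + prb P {ω | X ω = x} * (|dh x - δs x| * |ph false x - p false x|)
              + prb P {ω | X ω = x} * (|dh x - δs x| * |πh true x - π true x|)
              + prb P {ω | X ω = x} * (|dh x - δs x| * |πh false x - π false x|)
              + prb P {ω | X ω = x} * (|e11h x - e10h x - φ x| * |ph true x - p true x|)
              + prb P {ω | X ω = x} * (|wh x - w x| * |πh true x - π true x|)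
              + prb P {ω | X ω = x} * (|wh x - w x| * |πh false x - π false x|)
              + prb P {ω | X ω = x} * (|e10h x - e1z false x| * |πh true x - π true x|)
              + prb P {ω | X ω = x} * (|e10h x - e1z false x| * |πh false x - π false x|)
              + prb P {ω | X ω = x} * (|e10h x - e1z false x| * |ph true x - p true x|)
              + prb P {ω | X ω = x} * (|e10h x - e1z false x| * |ph false x - p false x|) :=
          fun x => by ring
        rw [Finset.sum_congr rfl fun x _ => hexp x]
        simp only [Finset.sum_add_distrib]
        exact add_le_add (add_le_add (add_le_add (add_le_add (add_le_add (add_le_add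
          (add_le_add (add_le_add (add_le_add (add_le_add hcs1 hcs2) hcs3) hcs4) hcs5)
          hcs6) hcs7) hcs8) hcs9) hcs10) hcs11
    _ = 4 / (c3 * c1 * c1) * (rδ * (rp1 + rp0 + rπ1 + rπ0) + rφ * rp1 + rwv * (rπ1 + rπ0)
          + re10 * (rπ1 + rπ0 + rp1 + rp0)) := by ring
end

section
/- (Second-moment bound for the plug-in influence function.) Let p̂_z, π̂_z : 𝒳→[c_1, 1−c_1] and ê_{11}, ê_{10}, ŵ, δ̂* : 𝒳→[−c_2,c_2] be arbitrary functions with |p̂_1(x)−p̂_0(x)| ≥ c_3 and |p_1(x)−p_0(x)| ≥ c_3 for all x, and set φ̂ := ê_{11}−ê_{10}, ρ̂ := p̂_1π̂_1 + p̂_0π̂_0. Define M := Aδ*(X) + θ(O) and M̂ := Aδ̂*(X) + θ̂(O), where θ̂(O) = [ρ̂(X)/(p̂_1(X)−p̂_0(X))]·[(2Z−1)/π̂_Z(X)]·{Y−Aδ̂*(X)−Zφ̂(X)−ŵ(X)−(A/p̂_Z(X))·(Y−Zφ̂(X)−ê_{10}(X))}. For a function f on 𝒳 and its estimate f̂, write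 r_f := (E[(f̂(X)−f(X))²])^{1/2}. Then there exists a constant C, depending only on c_1, c_2, c_3 and a uniform bound on the true nuisance functions, such that E[(M̂ − M)²] ≤ C·( r_{δ*}² + r_{φ}² + r_w² + r_{e_{10}}² + r_{p_1}² + r_{p_0}² + r_{π_1}² + r_{π_0}² ). -/
open MeasureTheory

lemma b2r_nonneg (b : Bool) : 0 ≤ b2r b := by cases b <;> simp [b2r]
lemma b2r_le_one (b : Bool) : b2r b ≤ 1 := by cases b <;> simp [b2r]

lemma abs_sub'' (a b : ℝ) : |a - b| ≤ |a| + |b| := by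
  rw [sub_eq_add_neg]
  exact (abs_add_le _ _).trans (by rw [abs_neg])

lemma abs_mul_sub (x x' u u' Bx Bu : ℝ) (hx : |x| ≤ Bx) (hu' : |u'| ≤ Bu) :
    |x' * u' - x * u| ≤ Bu * |x' - x| + Bx * |u' - u| := by
  have h : x' * u' - x * u = (x' - x) * u' + x * (u' - u) := by ring
  rw [h]
  calc |(x' - x) * u' + x * (u' - u)| ≤ |(x' - x) * u'| + |x * (u' - u)| := abs_add_le _ _
    _ = |x' - x| * |u'| + |x| * |u' - u| := by rw [abs_mul, abs_mul]
    _ ≤ |x' - x| * Bu + Bx * |u' - u| := by gcongr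
    _ = Bu * |x' - x| + Bx * |u' - u| := by ring

lemma abs_div_sub (m Bn : ℝ) (hm : 0 < m) (n n' t t' : ℝ)
    (hn : |n| ≤ Bn) (ht : m ≤ |t|) (ht' : m ≤ |t'|) :
    |n' / t' - n / t| ≤ (1 / m) * |n' - n| + (Bn / m ^ 2) * |t' - t| := by
  have ht0 : t ≠ 0 := by
    intro h; rw [h, abs_zero] at ht; linarith
  have ht'0 : t' ≠ 0 := by
    intro h; rw [h, abs_zero] at ht'; linarith
  have key : n' / t' - n / t = ((n' - n) * t - n * (t' - t)) / (t' * t) := by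
    field_simp; ring
  rw [key, abs_div, abs_mul]
  have hBn0 : 0 ≤ Bn := le_trans (abs_nonneg n) hn
  have hnum : |(n' - n) * t - n * (t' - t)| ≤ |n' - n| * |t| + Bn * |t' - t| := by
    calc |(n' - n) * t - n * (t' - t)| ≤ |(n' - n) * t| + |n * (t' - t)| := abs_sub'' _ _
      _ = |n' - n| * |t| + |n| * |t' - t| := by rw [abs_mul, abs_mul]
      _ ≤ |n' - n| * |t| + Bn * |t' - t| := by gcongr
  have hden0 : 0 < |t'| * |t| := by positivity
  rw [div_le_iff₀ hden0]
  have h1 : |n' - n| * |t| ≤ (1 / m) * |n' - n| * (|t'| * |t|) := by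
    have : (1 / m) * |n' - n| * (|t'| * |t|) = |n' - n| * |t| * (|t'| / m) := by ring
    rw [this]
    have h2 : (1 : ℝ) ≤ |t'| / m := (one_le_div hm).mpr ht'
    nlinarith [mul_nonneg (abs_nonneg (n' - n)) (abs_nonneg t)]
  have h2 : Bn * |t' - t| ≤ (Bn / m ^ 2) * |t' - t| * (|t'| * |t|) := by
    have e1 : (Bn / m ^ 2) * |t' - t| * (|t'| * |t|) = Bn * |t' - t| * ((|t'| * |t|) / m ^ 2) := by
      ring
    rw [e1]
    have h3 : (1 : ℝ) ≤ (|t'| * |t|) / m ^ 2 := by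
      rw [le_div_iff₀ (by positivity)]
      nlinarith
    nlinarith [mul_nonneg hBn0 (abs_nonneg (t' - t))]
  calc |(n' - n) * t - n * (t' - t)| ≤ |n' - n| * |t| + Bn * |t' - t| := hnum
    _ ≤ (1 / m) * |n' - n| * (|t'| * |t|) + (Bn / m ^ 2) * |t' - t| * (|t'| * |t|) := by
        linarith
    _ = ((1 / m) * |n' - n| + (Bn / m ^ 2) * |t' - t|) * (|t'| * |t|) := by ring

lemma cex_abs_le {Ω : Type*} [MeasurableSpace Ω] (P : Measure Ω) [IsFiniteMeasure P]
    {f : Ω → ℝ} (t : Set Ω) {c : ℝ} (hc : 0 ≤ c)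
    (hbd : ∀ᵐ ω ∂P, |f ω| ≤ c) : |cex P f t| ≤ c := by
  have hb : ‖∫ ω in t, f ω ∂P‖ ≤ ∫ _ω in t, c ∂P := by
    apply norm_integral_le_of_norm_le (integrable_const c)
    exact ae_restrict_of_ae (hbd.mono fun ω h => by simpa [Real.norm_eq_abs] using h)
  rw [setIntegral_const, smul_eq_mul] at hb
  have hprb : 0 ≤ prb P t := ENNReal.toReal_nonneg
  rw [cex, abs_div, abs_of_nonneg hprb]
  rcases eq_or_lt_of_le hprb with h0 | h0
  · rw [← h0, div_zero]; exact hc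
  · rw [div_le_iff₀ h0]
    calc |∫ ω in t, f ω ∂P| ≤ (P t).toReal * c := by
          simpa [Real.norm_eq_abs, Measure.real] using hb
      _ = c * prb P t := by rw [prb]; ring

section coefLemmas
variable {c1 c3 B : ℝ}

lemma aux_B3 (hB : 1 ≤ B) : B ≤ B ^ 3 := by
  nlinarith [mul_nonneg (mul_nonneg (sub_nonneg.mpr hB) (by linarith : (0:ℝ) ≤ B))
    (by linarith : (0:ℝ) ≤ B + 1)]

lemma aux_B13 (hB : 1 ≤ B) : 1 ≤ B ^ 3 := le_trans hB (aux_B3 hB)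

lemma aux_cc (hc1 : 0 < c1) (hc11 : c1 ≤ 1) (hc3 : 0 < c3) (hc31 : c3 ≤ 1) :
    c3 * c1 ≤ 1 := by nlinarith

lemma aux_cc2 (hc1 : 0 < c1) (hc11 : c1 ≤ 1) (hc3 : 0 < c3) (hc31 : c3 ≤ 1) :
    c3 * c1 ^ 2 ≤ 1 := by nlinarith

lemma aux_E1 (hc1 : 0 < c1) (hc11 : c1 ≤ 1) (hc3 : 0 < c3) (hc31 : c3 ≤ 1) (hB : 1 ≤ B) :
    (1:ℝ) ≤ B ^ 3 / (c3 ^ 2 * c1 ^ 3) := by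
  rw [le_div_iff₀ (by positivity)]
  have h1 : c1 ^ 3 ≤ 1 := by
    calc c1 ^ 3 ≤ 1 ^ 3 := pow_le_pow_left₀ hc1.le hc11 3
      _ = 1 := one_pow 3
  have h2 : c3 ^ 2 ≤ 1 := by
    calc c3 ^ 2 ≤ 1 ^ 2 := pow_le_pow_left₀ hc3.le hc31 2
      _ = 1 := one_pow 2
  have h3 : c3 ^ 2 * c1 ^ 3 ≤ 1 := by nlinarith [pow_nonneg hc1.le 3, sq_nonneg c3]
  linarith [aux_B13 hB]

lemma coefA (hc1 : 0 < c1) (hc11 : c1 ≤ 1) (hc3 : 0 < c3) (hc31 : c3 ≤ 1) (hB : 1 ≤ B) :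
    (7 * B / c1) * (1 / (c3 * c1)) ≤ 7 * (B ^ 3 / (c3 ^ 2 * c1 ^ 3)) := by
  have hB0 : (0:ℝ) < B := by linarith
  have e1 : (7 * B / c1) * (1 / (c3 * c1)) = (7 * B) / (c3 * c1 ^ 2) := by field_simp
  have e2 : 7 * (B ^ 3 / (c3 ^ 2 * c1 ^ 3)) = (7 * B ^ 3) / (c3 ^ 2 * c1 ^ 3) := by ring
  rw [e1, e2, div_le_div_iff₀ (by positivity) (by positivity)]
  have key1 : B * (c3 * c1) ≤ B ^ 3 := by
    have h := mul_le_mul_of_nonneg_left (aux_cc hc1 hc11 hc3 hc31) hB0.le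
    rw [mul_one] at h
    linarith [aux_B3 hB]
  nlinarith [mul_le_mul_of_nonneg_right key1 (show (0:ℝ) ≤ 7 * (c3 * c1 ^ 2) by positivity)]

lemma coefB (hc1 : 0 < c1) (hc3 : 0 < c3) (hB : 1 ≤ B) :
    (7 * B / c1) * (B / (c3 * c1) ^ 2 * B) ≤ 7 * (B ^ 3 / (c3 ^ 2 * c1 ^ 3)) := by
  apply le_of_eq
  field_simp

lemma coefC (hc1 : 0 < c1) (hc11 : c1 ≤ 1) (hc3 : 0 < c3) (hc31 : c3 ≤ 1) (hB : 1 ≤ B) :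
    (B / (c3 * c1)) * 1 ≤ 3 * (B ^ 3 / (c3 ^ 2 * c1 ^ 3)) := by
  have hB0 : (0:ℝ) < B := by linarith
  have e1 : (B / (c3 * c1)) * 1 = B / (c3 * c1) := by ring
  have e2 : 3 * (B ^ 3 / (c3 ^ 2 * c1 ^ 3)) = (3 * B ^ 3) / (c3 ^ 2 * c1 ^ 3) := by ring
  rw [e1, e2, div_le_div_iff₀ (by positivity) (by positivity)]
  have key1 : B * (c3 * c1 ^ 2) ≤ 3 * B ^ 3 := by
    have h := mul_le_mul_of_nonneg_left (aux_cc2 hc1 hc11 hc3 hc31) hB0.le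
    rw [mul_one] at h
    linarith [aux_B3 hB]
  nlinarith [mul_le_mul_of_nonneg_right key1 (show (0:ℝ) ≤ c3 * c1 by positivity)]

lemma coefD (hc1 : 0 < c1) (hc11 : c1 ≤ 1) (hc3 : 0 < c3) (hc31 : c3 ≤ 1) (hB : 1 ≤ B) :
    (B / (c3 * c1)) * (1 + 1 / c1) ≤ 3 * (B ^ 3 / (c3 ^ 2 * c1 ^ 3)) := by
  have hB0 : (0:ℝ) < B := by linarith
  have e1 : (B / (c3 * c1)) * (1 + 1 / c1) = (B * (c1 + 1)) / (c3 * c1 ^ 2) := by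
    field_simp
  have e2 : 3 * (B ^ 3 / (c3 ^ 2 * c1 ^ 3)) = (3 * B ^ 3) / (c3 ^ 2 * c1 ^ 3) := by ring
  rw [e1, e2, div_le_div_iff₀ (by positivity) (by positivity)]
  have key1 : B * (c1 + 1) * (c3 * c1) ≤ 3 * B ^ 3 := by
    have h1 : B * (c1 + 1) ≤ 2 * B := by nlinarith
    have h2 : B * (c1 + 1) * (c3 * c1) ≤ B * (c1 + 1) * 1 := by
      apply mul_le_mul_of_nonneg_left (aux_cc hc1 hc11 hc3 hc31)
      positivity
    rw [mul_one] at h2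
    linarith [aux_B3 hB]
  nlinarith [mul_le_mul_of_nonneg_right key1 (show (0:ℝ) ≤ c3 * c1 ^ 2 by positivity)]

lemma coefE (hc1 : 0 < c1) (hc11 : c1 ≤ 1) (hc3 : 0 < c3) (hc31 : c3 ≤ 1) (hB : 1 ≤ B) :
    (B / (c3 * c1)) * (3 * B / c1 ^ 2) ≤ 3 * (B ^ 3 / (c3 ^ 2 * c1 ^ 3)) := by
  have hB0 : (0:ℝ) < B := by linarith
  have e1 : (B / (c3 * c1)) * (3 * B / c1 ^ 2) = (3 * B ^ 2) / (c3 * c1 ^ 3) := by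
    rw [div_mul_div_comm, show B * (3 * B) = 3 * B ^ 2 by ring,
      show (c3 * c1) * c1 ^ 2 = c3 * c1 ^ 3 by ring]
  have e2 : 3 * (B ^ 3 / (c3 ^ 2 * c1 ^ 3)) = (3 * B ^ 3) / (c3 ^ 2 * c1 ^ 3) := by ring
  rw [e1, e2, div_le_div_iff₀ (by positivity) (by positivity)]
  have key1 : B ^ 2 * c3 ≤ B ^ 3 := by
    have h1 : B ^ 2 * c3 ≤ B ^ 2 * 1 := mul_le_mul_of_nonneg_left hc31 (sq_nonneg B)
    have h2 : B ^ 2 ≤ B ^ 3 := by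
      nlinarith [mul_nonneg (sub_nonneg.mpr hB) (sq_nonneg B)]
    rw [mul_one] at h1
    linarith
  nlinarith [mul_le_mul_of_nonneg_right key1 (show (0:ℝ) ≤ 3 * (c3 * c1 ^ 3) by positivity)]

lemma coefF (hc1 : 0 < c1) (hc11 : c1 ≤ 1) (hc3 : 0 < c3) (hc31 : c3 ≤ 1) (hB : 1 ≤ B) :
    (B / (c3 * c1)) * (1 / c1) ≤ 3 * (B ^ 3 / (c3 ^ 2 * c1 ^ 3)) := by
  have hB0 : (0:ℝ) < B := by linarith
  have e1 : (B / (c3 * c1)) * (1 / c1) = B / (c3 * c1 ^ 2) := by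
    rw [div_mul_div_comm, mul_one, show (c3 * c1) * c1 = c3 * c1 ^ 2 by ring]
  have e2 : 3 * (B ^ 3 / (c3 ^ 2 * c1 ^ 3)) = (3 * B ^ 3) / (c3 ^ 2 * c1 ^ 3) := by ring
  rw [e1, e2, div_le_div_iff₀ (by positivity) (by positivity)]
  have key1 : B * (c3 * c1) ≤ 3 * B ^ 3 := by
    have h := mul_le_mul_of_nonneg_left (aux_cc hc1 hc11 hc3 hc31) hB0.le
    rw [mul_one] at h
    linarith [aux_B3 hB]
  nlinarith [mul_le_mul_of_nonneg_right key1 (show (0:ℝ) ≤ c3 * c1 ^ 2 by positivity)]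

end coefLemmas

set_option maxHeartbeats 2000000 in
lemma lip (c1 c3 B : ℝ) (hc1 : 0 < c1) (hc11 : c1 ≤ 1) (hc3 : 0 < c3) (hc31 : c3 ≤ 1)
    (hB : 1 ≤ B)
    (a z s y : ℝ) (ha0 : 0 ≤ a) (ha1 : a ≤ 1) (hz0 : 0 ≤ z) (hz1 : z ≤ 1)
    (hs : |s| = 1) (hy : |y| ≤ B)
    (ρ D πz pz d f w e ρ' D' πz' pz' d' f' w' e' : ℝ)
    (hρ : |ρ| ≤ B) (hρ' : |ρ'| ≤ B)
    (hD : c3 ≤ |D|) (hD' : c3 ≤ |D'|) (hDB : |D| ≤ B) (hD'B : |D'| ≤ B)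
    (hπ1 : c1 ≤ πz) (hπ1' : c1 ≤ πz') (hπB : πz ≤ B) (hπ'B : πz' ≤ B)
    (hp1 : c1 ≤ pz) (hp1' : c1 ≤ pz') (hpB : pz ≤ B) (hp'B : pz' ≤ B)
    (hd : |d| ≤ B) (hd' : |d'| ≤ B) (hf : |f| ≤ B) (hf' : |f'| ≤ B)
    (hw : |w| ≤ B) (hw' : |w'| ≤ B) (he : |e| ≤ B) (he' : |e'| ≤ B) :
    |(a * d' + ρ' / D' * (s / πz') * (y - a * d' - z * f' - w' - a / pz' * (y - z * f' - e')))
      - (a * d + ρ / D * (s / πz) * (y - a * d - z * f - w - a / pz * (y - z * f - e)))|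
    ≤ (11 * (B ^ 3 / (c3 ^ 2 * c1 ^ 3)))
        * (|ρ' - ρ| + |D' - D| + |πz' - πz| + |pz' - pz|
            + |d' - d| + |f' - f| + |w' - w| + |e' - e|) := by
  have hB0 : (0:ℝ) < B := by linarith
  have hB3 : B ≤ B ^ 3 := aux_B3 hB
  have hπabs : |πz| ≤ B := by rw [abs_of_pos (lt_of_lt_of_le hc1 hπ1)]; exact hπB
  have hπ'abs : |πz'| ≤ B := by rw [abs_of_pos (lt_of_lt_of_le hc1 hπ1')]; exact hπ'B
  have hπm : c1 ≤ |πz| := le_trans hπ1 (le_abs_self _)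
  have hπ'm : c1 ≤ |πz'| := le_trans hπ1' (le_abs_self _)
  have hpm : c1 ≤ |pz| := le_trans hp1 (le_abs_self _)
  have hp'm : c1 ≤ |pz'| := le_trans hp1' (le_abs_self _)
  have hq_eq : ρ / D * (s / πz) = (ρ * s) / (D * πz) := div_mul_div_comm _ _ _ _
  have hq'_eq : ρ' / D' * (s / πz') = (ρ' * s) / (D' * πz') := div_mul_div_comm _ _ _ _
  set q : ℝ := (ρ * s) / (D * πz) with hqdef
  set q' : ℝ := (ρ' * s) / (D' * πz') with hq'def
  have hns : |ρ * s| ≤ B := by rw [abs_mul, hs, mul_one]; exact hρ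
  have hns' : |ρ' * s| ≤ B := by rw [abs_mul, hs, mul_one]; exact hρ'
  have hDen : c3 * c1 ≤ |D * πz| := by
    rw [abs_mul]; exact mul_le_mul hD hπm (by linarith) (le_trans (by positivity) hD)
  have hDen' : c3 * c1 ≤ |D' * πz'| := by
    rw [abs_mul]; exact mul_le_mul hD' hπ'm (by linarith) (le_trans (by positivity) hD')
  have hcc : (0:ℝ) < c3 * c1 := by positivity
  have hqB : |q| ≤ B / (c3 * c1) := by
    rw [hqdef, abs_div]
    exact div_le_div₀ (le_of_lt hB0) hns hcc hDen
  have hqd : |q' - q| ≤ (1 / (c3 * c1)) * |ρ' - ρ|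
      + (B / (c3 * c1) ^ 2) * (B * |D' - D| + B * |πz' - πz|) := by
    have h1 := abs_div_sub (c3 * c1) B hcc (ρ * s) (ρ' * s) (D * πz) (D' * πz') hns hDen hDen'
    have h2 : |ρ' * s - ρ * s| = |ρ' - ρ| := by
      have h : ρ' * s - ρ * s = (ρ' - ρ) * s := by ring
      rw [h, abs_mul, hs, mul_one]
    have h3 : |D' * πz' - D * πz| ≤ B * |D' - D| + B * |πz' - πz| :=
      abs_mul_sub D D' πz πz' B B hDB hπ'abs
    rw [h2] at h1
    have h4 : (B / (c3 * c1) ^ 2) * |D' * πz' - D * πz|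
        ≤ (B / (c3 * c1) ^ 2) * (B * |D' - D| + B * |πz' - πz|) :=
      mul_le_mul_of_nonneg_left h3 (by positivity)
    calc |q' - q| ≤ (1 / (c3 * c1)) * |ρ' - ρ| + (B / (c3 * c1) ^ 2) * |D' * πz' - D * πz| := h1
      _ ≤ _ := by linarith
  set t2 : ℝ := y - z * f - e with ht2def
  set t2' : ℝ := y - z * f' - e' with ht2'def
  have ht2B : |t2| ≤ 3 * B := by
    rw [ht2def]
    calc |y - z * f - e| ≤ |y - z * f| + |e| := abs_sub'' _ _
      _ ≤ (|y| + |z * f|) + |e| := by linarith [abs_sub'' y (z * f)]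
      _ ≤ 3 * B := by
          rw [abs_mul]
          have h : |z| * |f| ≤ 1 * B :=
            mul_le_mul (abs_le.mpr ⟨by linarith, hz1⟩) hf (abs_nonneg _) one_pos.le
          linarith
  have ht2'B : |t2'| ≤ 3 * B := by
    rw [ht2'def]
    calc |y - z * f' - e'| ≤ |y - z * f'| + |e'| := abs_sub'' _ _
      _ ≤ (|y| + |z * f'|) + |e'| := by linarith [abs_sub'' y (z * f')]
      _ ≤ 3 * B := by
          rw [abs_mul]
          have h : |z| * |f'| ≤ 1 * B :=
            mul_le_mul (abs_le.mpr ⟨by linarith, hz1⟩) hf' (abs_nonneg _) one_pos.le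
          linarith
  have ht2d : |t2' - t2| ≤ |f' - f| + |e' - e| := by
    have h : t2' - t2 = -(z * (f' - f)) - (e' - e) := by rw [ht2'def, ht2def]; ring
    rw [h]
    calc |-(z * (f' - f)) - (e' - e)| ≤ |(-(z * (f' - f)))| + |e' - e| := abs_sub'' _ _
      _ = |z| * |f' - f| + |e' - e| := by rw [abs_neg, abs_mul]
      _ ≤ 1 * |f' - f| + |e' - e| := by
          have h2 : |z| ≤ 1 := abs_le.mpr ⟨by linarith, hz1⟩
          have := mul_le_mul_of_nonneg_right h2 (abs_nonneg (f' - f))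
          linarith
      _ = |f' - f| + |e' - e| := by ring
  set r3 : ℝ := a / pz with hr3def
  set r3' : ℝ := a / pz' with hr3'def
  have haabs : |a| ≤ 1 := abs_le.mpr ⟨by linarith, ha1⟩
  have hr3B : |r3| ≤ 1 / c1 := by
    rw [hr3def, abs_div]
    exact div_le_div₀ one_pos.le haabs hc1 hpm
  have hr3'B : |r3'| ≤ 1 / c1 := by
    rw [hr3'def, abs_div]
    exact div_le_div₀ one_pos.le haabs hc1 hp'm
  have hr3d : |r3' - r3| ≤ (1 / c1 ^ 2) * |pz' - pz| := by
    have h1 := abs_div_sub c1 1 hc1 a a pz pz' haabs hpm hp'm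
    rw [hr3'def, hr3def]
    simpa using h1
  have hu3d : |r3' * t2' - r3 * t2| ≤ (3 * B) * |r3' - r3| + (1 / c1) * |t2' - t2| :=
    abs_mul_sub r3 r3' t2 t2' (1 / c1) (3 * B) hr3B ht2'B
  set v : ℝ := y - a * d - z * f - w - r3 * t2 with hvdef
  set v' : ℝ := y - a * d' - z * f' - w' - r3' * t2' with hv'def
  have hv'B : |v'| ≤ 7 * B / c1 := by
    have h1 : |r3' * t2'| ≤ (1 / c1) * (3 * B) := by
      rw [abs_mul]
      exact mul_le_mul hr3'B ht2'B (abs_nonneg _) (by positivity)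
    have h2 : |v'| ≤ |y| + |a * d'| + |z * f'| + |w'| + |r3' * t2'| := by
      rw [hv'def]
      calc |y - a * d' - z * f' - w' - r3' * t2'|
          ≤ |y - a * d' - z * f' - w'| + |r3' * t2'| := abs_sub'' _ _
        _ ≤ (|y - a * d' - z * f'| + |w'|) + |r3' * t2'| := by
            linarith [abs_sub'' (y - a * d' - z * f') w']
        _ ≤ ((|y - a * d'| + |z * f'|) + |w'|) + |r3' * t2'| := by
            linarith [abs_sub'' (y - a * d') (z * f')]
        _ ≤ (((|y| + |a * d'|) + |z * f'|) + |w'|) + |r3' * t2'| := by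
            linarith [abs_sub'' y (a * d')]
        _ = _ := by ring
    have ha' : |a * d'| ≤ 1 * B := by
      rw [abs_mul]; exact mul_le_mul haabs hd' (abs_nonneg _) one_pos.le
    have hz' : |z * f'| ≤ 1 * B := by
      rw [abs_mul]; exact mul_le_mul (abs_le.mpr ⟨by linarith, hz1⟩) hf' (abs_nonneg _) one_pos.le
    have h4 : 4 * B ≤ 4 * B / c1 := by
      rw [le_div_iff₀ hc1]
      have := mul_le_mul_of_nonneg_left hc11 (show (0:ℝ) ≤ 4 * B by positivity)
      linarith
    have h7 : (1 / c1) * (3 * B) = 3 * B / c1 := by ring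
    have h8 : 4 * B / c1 + 3 * B / c1 = 7 * B / c1 := by ring
    linarith [h1.trans_eq h7]
  have hvd : |v' - v| ≤ 1 * |d' - d| + (1 + 1 / c1) * |f' - f| + 1 * |w' - w|
      + (3 * B / c1 ^ 2) * |pz' - pz| + (1 / c1) * |e' - e| := by
    have h : v' - v = -(a * (d' - d)) - z * (f' - f) - (w' - w) - (r3' * t2' - r3 * t2) := by
      rw [hv'def, hvdef]; ring
    have step : |v' - v| ≤ |a| * |d' - d| + |z| * |f' - f| + |w' - w|
        + |r3' * t2' - r3 * t2| := by
      rw [h]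
      calc |(-(a * (d' - d)) - z * (f' - f) - (w' - w)) - (r3' * t2' - r3 * t2)|
          ≤ |(-(a * (d' - d)) - z * (f' - f)) - (w' - w)| + |r3' * t2' - r3 * t2| := by
            linarith [abs_sub'' (-(a * (d' - d)) - z * (f' - f) - (w' - w)) (r3' * t2' - r3 * t2),
              abs_sub'' (-(a * (d' - d)) - z * (f' - f)) (w' - w)]
        _ ≤ ((|(-(a * (d' - d)))| + |z * (f' - f)|) + |w' - w|) + |r3' * t2' - r3 * t2| := by
            linarith [abs_sub'' (-(a * (d' - d)) - z * (f' - f)) (w' - w),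
              abs_sub'' (-(a * (d' - d))) (z * (f' - f))]
        _ = _ := by rw [abs_neg, abs_mul, abs_mul]
    have ha' : |a| * |d' - d| ≤ 1 * |d' - d| :=
      mul_le_mul_of_nonneg_right haabs (abs_nonneg _)
    have hz' : |z| * |f' - f| ≤ 1 * |f' - f| :=
      mul_le_mul_of_nonneg_right (abs_le.mpr ⟨by linarith, hz1⟩) (abs_nonneg _)
    have hr3d' : (3 * B) * |r3' - r3| ≤ (3 * B) * ((1 / c1 ^ 2) * |pz' - pz|) :=
      mul_le_mul_of_nonneg_left hr3d (by positivity)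
    have ht2d' : (1 / c1) * |t2' - t2| ≤ (1 / c1) * (|f' - f| + |e' - e|) :=
      mul_le_mul_of_nonneg_left ht2d (by positivity)
    have e1 : (3 * B) * ((1 / c1 ^ 2) * |pz' - pz|) = (3 * B / c1 ^ 2) * |pz' - pz| := by ring
    have e2 : (1 / c1) * (|f' - f| + |e' - e|) = (1 / c1) * |f' - f| + (1 / c1) * |e' - e| := by
      ring
    have e3 : (1 + 1 / c1) * |f' - f| = 1 * |f' - f| + (1 / c1) * |f' - f| := by ring
    linarith [hu3d]
  have key : |(a * d' + q' * v') - (a * d + q * v)| ≤ |d' - d| + |q' * v' - q * v| := by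
    have h : (a * d' + q' * v') - (a * d + q * v) = a * (d' - d) + (q' * v' - q * v) := by ring
    rw [h]
    calc |a * (d' - d) + (q' * v' - q * v)| ≤ |a * (d' - d)| + |q' * v' - q * v| := abs_add_le _ _
      _ ≤ |d' - d| + |q' * v' - q * v| := by
          rw [abs_mul]
          have := mul_le_mul_of_nonneg_right haabs (abs_nonneg (d' - d))
          linarith
  have hqv : |q' * v' - q * v| ≤ (7 * B / c1) * |q' - q| + (B / (c3 * c1)) * |v' - v| :=
    abs_mul_sub q q' v v' (B / (c3 * c1)) (7 * B / c1) hqB hv'B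
  set E : ℝ := B ^ 3 / (c3 ^ 2 * c1 ^ 3) with hEdef
  have hE0 : (0:ℝ) < E := by rw [hEdef]; positivity
  have hE1 : (1:ℝ) ≤ E := by rw [hEdef]; exact aux_E1 hc1 hc11 hc3 hc31 hB
  have c1' : (7 * B / c1) * (1 / (c3 * c1)) ≤ 7 * E := by
    rw [hEdef]; exact coefA hc1 hc11 hc3 hc31 hB
  have c2' : (7 * B / c1) * (B / (c3 * c1) ^ 2 * B) ≤ 7 * E := by
    rw [hEdef]; exact coefB hc1 hc3 hB
  have c3' : (B / (c3 * c1)) * 1 ≤ 3 * E := by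
    rw [hEdef]; exact coefC hc1 hc11 hc3 hc31 hB
  have c4' : (B / (c3 * c1)) * (1 + 1 / c1) ≤ 3 * E := by
    rw [hEdef]; exact coefD hc1 hc11 hc3 hc31 hB
  have c5' : (B / (c3 * c1)) * (3 * B / c1 ^ 2) ≤ 3 * E := by
    rw [hEdef]; exact coefE hc1 hc11 hc3 hc31 hB
  have c6' : (B / (c3 * c1)) * (1 / c1) ≤ 3 * E := by
    rw [hEdef]; exact coefF hc1 hc11 hc3 hc31 hB
  have hX1 := abs_nonneg (ρ' - ρ); have hX2 := abs_nonneg (D' - D)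
  have hX3 := abs_nonneg (πz' - πz); have hX4 := abs_nonneg (pz' - pz)
  have hX5 := abs_nonneg (d' - d); have hX6 := abs_nonneg (f' - f)
  have hX7 := abs_nonneg (w' - w); have hX8 := abs_nonneg (e' - e)
  have hq'qS : (7 * B / c1) * |q' - q|
      ≤ 7 * E * |ρ' - ρ| + 7 * E * |D' - D| + 7 * E * |πz' - πz| := by
    have h0 : (0:ℝ) ≤ 7 * B / c1 := by positivity
    have h1 := mul_le_mul_of_nonneg_left hqd h0
    have h2 : (7 * B / c1) * ((1 / (c3 * c1)) * |ρ' - ρ|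
        + (B / (c3 * c1) ^ 2) * (B * |D' - D| + B * |πz' - πz|))
        = ((7 * B / c1) * (1 / (c3 * c1))) * |ρ' - ρ|
          + ((7 * B / c1) * (B / (c3 * c1) ^ 2 * B)) * |D' - D|
          + ((7 * B / c1) * (B / (c3 * c1) ^ 2 * B)) * |πz' - πz| := by ring
    rw [h2] at h1
    linarith [mul_le_mul_of_nonneg_right c1' hX1,
      mul_le_mul_of_nonneg_right c2' hX2,
      mul_le_mul_of_nonneg_right c2' hX3]
  have hv'vS : (B / (c3 * c1)) * |v' - v|
      ≤ 3 * E * |pz' - pz| + 3 * E * |d' - d| + 3 * E * |f' - f|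
        + 3 * E * |w' - w| + 3 * E * |e' - e| := by
    have h0 : (0:ℝ) ≤ B / (c3 * c1) := by positivity
    have h1 := mul_le_mul_of_nonneg_left hvd h0
    have h2 : (B / (c3 * c1)) * (1 * |d' - d| + (1 + 1 / c1) * |f' - f| + 1 * |w' - w|
        + (3 * B / c1 ^ 2) * |pz' - pz| + (1 / c1) * |e' - e|)
        = ((B / (c3 * c1)) * 1) * |d' - d| + ((B / (c3 * c1)) * (1 + 1 / c1)) * |f' - f|
          + ((B / (c3 * c1)) * 1) * |w' - w|
          + ((B / (c3 * c1)) * (3 * B / c1 ^ 2)) * |pz' - pz|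
          + ((B / (c3 * c1)) * (1 / c1)) * |e' - e| := by ring
    rw [h2] at h1
    linarith [mul_le_mul_of_nonneg_right c3' hX5,
      mul_le_mul_of_nonneg_right c4' hX6,
      mul_le_mul_of_nonneg_right c3' hX7,
      mul_le_mul_of_nonneg_right c5' hX4,
      mul_le_mul_of_nonneg_right c6' hX8]
  rw [hq_eq, hq'_eq]
  have hdist : (11 * E) * (|ρ' - ρ| + |D' - D| + |πz' - πz| + |pz' - pz|
      + |d' - d| + |f' - f| + |w' - w| + |e' - e|)
      = 11 * E * |ρ' - ρ| + 11 * E * |D' - D| + 11 * E * |πz' - πz| + 11 * E * |pz' - pz|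
        + 11 * E * |d' - d| + 11 * E * |f' - f| + 11 * E * |w' - w| + 11 * E * |e' - e| := by
    ring
  have hEX1 := mul_nonneg hE0.le hX1
  have hEX2 := mul_nonneg hE0.le hX2
  have hEX3 := mul_nonneg hE0.le hX3
  have hEX4 := mul_nonneg hE0.le hX4
  have hEX5 := mul_le_mul_of_nonneg_right hE1 hX5
  have hEX6 := mul_nonneg hE0.le hX6
  have hEX7 := mul_nonneg hE0.le hX7
  have hEX8 := mul_nonneg hE0.le hX8
  calc |(a * d' + q' * v') - (a * d + q * v)| ≤ |d' - d| + |q' * v' - q * v| := key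
    _ ≤ |d' - d| + ((7 * B / c1) * |q' - q| + (B / (c3 * c1)) * |v' - v|) := by linarith
    _ ≤ (11 * E) * (|ρ' - ρ| + |D' - D| + |πz' - πz| + |pz' - pz|
        + |d' - d| + |f' - f| + |w' - w| + |e' - e|) := by
      rw [hdist]; linarith

lemma sq_sum8 (a1 a2 a3 a4 a5 a6 a7 a8 : ℝ) :
    (a1 + a2 + a3 + a4 + a5 + a6 + a7 + a8) ^ 2
    ≤ 8 * (a1 ^ 2 + a2 ^ 2 + a3 ^ 2 + a4 ^ 2 + a5 ^ 2 + a6 ^ 2 + a7 ^ 2 + a8 ^ 2) := by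
  nlinarith [sq_nonneg (a1 - a2), sq_nonneg (a3 - a4), sq_nonneg (a5 - a6), sq_nonneg (a7 - a8),
    sq_nonneg (a1 + a2 - a3 - a4), sq_nonneg (a5 + a6 - a7 - a8),
    sq_nonneg (a1 + a2 + a3 + a4 - a5 - a6 - a7 - a8)]

set_option maxHeartbeats 1000000 in
/-- Second-moment bound for the plug-in influence function:
`E[(M̂ − M)²]` is bounded by a constant times the sum of the squared nuisance
estimation errors. -/
theorem second_moment_bound
    {Ω 𝒳 : Type*} [MeasurableSpace Ω]
    [Fintype 𝒳] [MeasurableSpace 𝒳] [MeasurableSingletonClass 𝒳]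
    (P : Measure Ω) [IsProbabilityMeasure P]
    (Y : Ω → ℝ) (A Z : Ω → Bool) (X : Ω → 𝒳)
    (hY : Measurable Y) (hA : Measurable A) (hZ : Measurable Z) (hX : Measurable X)
    -- constants
    (c1 c2 c3 : ℝ) (hc1 : 0 < c1) (hc1' : c1 < 1/2) (hc2 : 0 < c2) (hc3 : 0 < c3)
    -- bounded outcome
    (hYbd : ∀ᵐ ω ∂P, |Y ω| ≤ c2)
    -- positivity
    (hXpos : ∀ x, 0 < prb P {ω | X ω = x})
    (hApos : 0 < prb P {ω | A ω = true})
    -- true nuisance functions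
    (p π : Bool → 𝒳 → ℝ)
    (hp : ∀ z x, p z x = cprb P {ω | A ω = true} {ω | Z ω = z ∧ X ω = x})
    (hπ : ∀ z x, π z x = cprb P {ω | Z ω = z} {ω | X ω = x})
    (hpbd : ∀ z x, p z x ∈ Set.Icc c1 (1 - c1))
    (hπbd : ∀ z x, π z x ∈ Set.Icc c1 (1 - c1))
    (hrel : ∀ x, c3 ≤ |p true x - p false x|)
    (e : Bool → 𝒳 → ℝ)
    (he : ∀ z x, e z x = cex P Y {ω | Z ω = z ∧ X ω = x})
    (e1z : Bool → 𝒳 → ℝ)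
    (he1z : ∀ z x, e1z z x = cex P Y {ω | A ω = true ∧ Z ω = z ∧ X ω = x})
    (ρ : 𝒳 → ℝ) (hρ : ∀ x, ρ x = cprb P {ω | A ω = true} {ω | X ω = x})
    (φ : 𝒳 → ℝ) (hφ : ∀ x, φ x = e1z true x - e1z false x)
    (δs : 𝒳 → ℝ)
    (hδs : ∀ x, δs x = (e true x - e false x) / (p true x - p false x)
      - φ x / (p true x - p false x))
    (w : 𝒳 → ℝ)
    (hw : ∀ x, w x = cex P (fun ω => Y ω - b2r (A ω) * δs (X ω) - b2r (Z ω) * φ (X ω))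
      {ω | X ω = x})
    (θ : Ω → ℝ)
    (hθ : ∀ ω, θ ω =
      ρ (X ω) / (p true (X ω) - p false (X ω)) * ((2 * b2r (Z ω) - 1) / π (Z ω) (X ω))
        * (Y ω - b2r (A ω) * δs (X ω) - b2r (Z ω) * φ (X ω) - w (X ω)
            - b2r (A ω) / p (Z ω) (X ω)
              * (Y ω - b2r (Z ω) * φ (X ω) - e1z false (X ω)))) :
    ∃ C : ℝ, 0 < C ∧
      ∀ (ph πh : Bool → 𝒳 → ℝ) (e11h e10h wh dh : 𝒳 → ℝ),
        (∀ z x, ph z x ∈ Set.Icc c1 (1 - c1)) →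
        (∀ z x, πh z x ∈ Set.Icc c1 (1 - c1)) →
        (∀ x, e11h x ∈ Set.Icc (-c2) c2) →
        (∀ x, e10h x ∈ Set.Icc (-c2) c2) →
        (∀ x, wh x ∈ Set.Icc (-c2) c2) →
        (∀ x, dh x ∈ Set.Icc (-c2) c2) →
        (∀ x, c3 ≤ |ph true x - ph false x|) →
        ∀ (φh ρh : 𝒳 → ℝ),
          (∀ x, φh x = e11h x - e10h x) →
          (∀ x, ρh x = ph true x * πh true x + ph false x * πh false x) →
        ∀ (θh : Ω → ℝ),
          (∀ ω, θh ω =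
            ρh (X ω) / (ph true (X ω) - ph false (X ω))
              * ((2 * b2r (Z ω) - 1) / πh (Z ω) (X ω))
              * (Y ω - b2r (A ω) * dh (X ω) - b2r (Z ω) * φh (X ω) - wh (X ω)
                  - b2r (A ω) / ph (Z ω) (X ω)
                    * (Y ω - b2r (Z ω) * φh (X ω) - e10h (X ω)))) →
        ∀ (rp1 rp0 rπ1 rπ0 rφ rw re10 rδ : ℝ),
          rp1 = Real.sqrt (∫ ω, (ph true (X ω) - p true (X ω)) ^ 2 ∂P) →
          rp0 = Real.sqrt (∫ ω, (ph false (X ω) - p false (X ω)) ^ 2 ∂P) →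
          rπ1 = Real.sqrt (∫ ω, (πh true (X ω) - π true (X ω)) ^ 2 ∂P) →
          rπ0 = Real.sqrt (∫ ω, (πh false (X ω) - π false (X ω)) ^ 2 ∂P) →
          rφ = Real.sqrt (∫ ω, (φh (X ω) - φ (X ω)) ^ 2 ∂P) →
          rw = Real.sqrt (∫ ω, (wh (X ω) - w (X ω)) ^ 2 ∂P) →
          re10 = Real.sqrt (∫ ω, (e10h (X ω) - e1z false (X ω)) ^ 2 ∂P) →
          rδ = Real.sqrt (∫ ω, (dh (X ω) - δs (X ω)) ^ 2 ∂P) →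
          ∫ ω, ((b2r (A ω) * dh (X ω) + θh ω) - (b2r (A ω) * δs (X ω) + θ ω)) ^ 2 ∂P
            ≤ C * (rδ ^ 2 + rφ ^ 2 + rw ^ 2 + re10 ^ 2
                + rp1 ^ 2 + rp0 ^ 2 + rπ1 ^ 2 + rπ0 ^ 2) := by
  have hc11 : c1 ≤ 1 := by linarith
  -- 𝒳 is inhabited via A-positivity
  have hAne : ({ω | A ω = true} : Set Ω).Nonempty := by
    by_contra h
    rw [Set.not_nonempty_iff_eq_empty] at h
    rw [h] at hApos
    simp [prb] at hApos
  obtain ⟨ω0, -⟩ := hAne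
  have hc31 : c3 ≤ 1 := by
    have h := hrel (X ω0)
    have h1 := hpbd true (X ω0)
    have h0 := hpbd false (X ω0)
    have habs : |p true (X ω0) - p false (X ω0)| ≤ 1 :=
      abs_le.mpr ⟨by linarith [h1.1, h0.2], by linarith [h1.2, h0.1]⟩
    linarith
  -- measurability of basic sets
  have hmX : ∀ x : 𝒳, MeasurableSet {ω | X ω = x} := fun x => hX (measurableSet_singleton x)
  have hmA : MeasurableSet {ω | A ω = true} := hA (measurableSet_singleton true)
  have hmZ : ∀ z, MeasurableSet {ω | Z ω = z} := fun z => hZ (measurableSet_singleton z)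
  have hprb_nonneg : ∀ s : Set Ω, 0 ≤ prb P s := fun _ => ENNReal.toReal_nonneg
  have hadd : ∀ u v : Set Ω, MeasurableSet v → Disjoint u v →
      prb P (u ∪ v) = prb P u + prb P v := by
    intro u v hv hd
    show (P (u ∪ v)).toReal = (P u).toReal + (P v).toReal
    rw [measure_union hd hv, ENNReal.toReal_add (measure_ne_top P u) (measure_ne_top P v)]
  -- positivity of the Z-slices
  have hSzpos : ∀ z x, 0 < prb P ({ω | Z ω = z} ∩ {ω | X ω = x}) := by
    intro z x
    have hπx := hπ z x
    rw [cprb] at hπx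
    have h1 := (hπbd z x).1
    rcases (hprb_nonneg ({ω | Z ω = z} ∩ {ω | X ω = x})).eq_or_lt with h0 | h0
    · exfalso
      rw [← h0, zero_div] at hπx
      rw [hπx] at h1
      linarith
    · exact h0
  -- p z x * π z x
  have hpπ : ∀ z x, p z x * π z x
      = prb P ({ω | A ω = true} ∩ ({ω | Z ω = z} ∩ {ω | X ω = x})) / prb P {ω | X ω = x} := by
    intro z x
    have hset : {ω | Z ω = z ∧ X ω = x} = {ω | Z ω = z} ∩ {ω | X ω = x} := rfl
    rw [hp z x, hπ z x, cprb, cprb, hset]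
    have hS := (hSzpos z x).ne'
    have hX0 := (hXpos x).ne'
    field_simp
    try ring
  -- tower identity
  have hρ_id : ∀ x, ρ x = p true x * π true x + p false x * π false x := by
    intro x
    have hdisj : Disjoint ({ω | A ω = true} ∩ ({ω | Z ω = true} ∩ {ω | X ω = x}))
        ({ω | A ω = true} ∩ ({ω | Z ω = false} ∩ {ω | X ω = x})) := by
      rw [Set.disjoint_left]
      rintro ω ⟨_, hZ1, _⟩ ⟨_, hZ2, _⟩
      have h1 : Z ω = true := hZ1
      have h2 : Z ω = false := hZ2
      rw [h1] at h2
      exact Bool.noConfusion h2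
    have hunion : ({ω | A ω = true} : Set Ω) ∩ {ω | X ω = x}
        = ({ω | A ω = true} ∩ ({ω | Z ω = true} ∩ {ω | X ω = x}))
          ∪ ({ω | A ω = true} ∩ ({ω | Z ω = false} ∩ {ω | X ω = x})) := by
      ext ω
      simp only [Set.mem_inter_iff, Set.mem_union, Set.mem_setOf_eq]
      cases hzz : Z ω <;> simp [hzz] <;> tauto
    rw [hρ x, cprb, hunion, hadd _ _ (hmA.inter ((hmZ false).inter (hmX x))) hdisj,
      add_div, hpπ true x, hpπ false x]
  -- bounds on true nuisance functions
  have hρbd : ∀ x, 0 ≤ ρ x ∧ ρ x ≤ 2 := by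
    intro x
    rw [hρ_id x]
    have h1 := hpbd true x; have h2 := hπbd true x
    have h3 := hpbd false x; have h4 := hπbd false x
    have hm1 : 0 ≤ p true x * π true x := mul_nonneg (by linarith [h1.1]) (by linarith [h2.1])
    have hm2 : 0 ≤ p false x * π false x := mul_nonneg (by linarith [h3.1]) (by linarith [h4.1])
    have hM1 : p true x * π true x ≤ 1 :=
      mul_le_one₀ (by linarith [h1.2]) (by linarith [h2.1]) (by linarith [h2.2])
    have hM2 : p false x * π false x ≤ 1 :=
      mul_le_one₀ (by linarith [h3.2]) (by linarith [h4.1]) (by linarith [h4.2])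
    exact ⟨by linarith, by linarith⟩
  have he_bd : ∀ z x, |e z x| ≤ c2 := by
    intro z x
    rw [he z x]
    exact cex_abs_le P _ hc2.le hYbd
  have he1z_bd : ∀ z x, |e1z z x| ≤ c2 := by
    intro z x
    rw [he1z z x]
    exact cex_abs_le P _ hc2.le hYbd
  have hφ_bd : ∀ x, |φ x| ≤ 2 * c2 := by
    intro x
    rw [hφ x]
    calc |e1z true x - e1z false x| ≤ |e1z true x| + |e1z false x| := abs_sub'' _ _
      _ ≤ 2 * c2 := by linarith [he1z_bd true x, he1z_bd false x]
  have hδs_bd : ∀ x, |δs x| ≤ 4 * c2 / c3 := by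
    intro x
    rw [hδs x]
    have hDx := hrel x
    have h1 : |(e true x - e false x) / (p true x - p false x)| ≤ 2 * c2 / c3 := by
      rw [abs_div]
      apply div_le_div₀ (by positivity) _ hc3 hDx
      calc |e true x - e false x| ≤ |e true x| + |e false x| := abs_sub'' _ _
        _ ≤ 2 * c2 := by linarith [he_bd true x, he_bd false x]
    have h2 : |φ x / (p true x - p false x)| ≤ 2 * c2 / c3 := by
      rw [abs_div]
      exact div_le_div₀ (by positivity) (hφ_bd x) hc3 hDx
    calc |(e true x - e false x) / (p true x - p false x) - φ x / (p true x - p false x)|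
        ≤ |(e true x - e false x) / (p true x - p false x)|
          + |φ x / (p true x - p false x)| := abs_sub'' _ _
      _ ≤ 2 * c2 / c3 + 2 * c2 / c3 := by linarith
      _ = 4 * c2 / c3 := by ring
  have hw_bd : ∀ x, |w x| ≤ 3 * c2 + 4 * c2 / c3 := by
    intro x
    rw [hw x]
    apply cex_abs_le P _ (by positivity)
    filter_upwards [hYbd] with ω hω
    have hb1 : |b2r (A ω) * δs (X ω)| ≤ 4 * c2 / c3 := by
      rw [abs_mul]
      calc |b2r (A ω)| * |δs (X ω)| ≤ 1 * (4 * c2 / c3) := by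
            apply mul_le_mul _ (hδs_bd (X ω)) (abs_nonneg _) one_pos.le
            rw [abs_of_nonneg (b2r_nonneg _)]; exact b2r_le_one _
        _ = 4 * c2 / c3 := one_mul _
    have hb2 : |b2r (Z ω) * φ (X ω)| ≤ 2 * c2 := by
      rw [abs_mul]
      calc |b2r (Z ω)| * |φ (X ω)| ≤ 1 * (2 * c2) := by
            apply mul_le_mul _ (hφ_bd (X ω)) (abs_nonneg _) one_pos.le
            rw [abs_of_nonneg (b2r_nonneg _)]; exact b2r_le_one _
        _ = 2 * c2 := one_mul _
    calc |Y ω - b2r (A ω) * δs (X ω) - b2r (Z ω) * φ (X ω)|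
        ≤ |Y ω - b2r (A ω) * δs (X ω)| + |b2r (Z ω) * φ (X ω)| := abs_sub'' _ _
      _ ≤ (|Y ω| + |b2r (A ω) * δs (X ω)|) + |b2r (Z ω) * φ (X ω)| := by
          linarith [abs_sub'' (Y ω) (b2r (A ω) * δs (X ω))]
      _ ≤ 3 * c2 + 4 * c2 / c3 := by linarith
  -- the uniform bound B
  set B : ℝ := 2 + 7 * c2 + 7 * c2 / c3 with hBdef
  have hc2c3 : 0 ≤ 7 * c2 / c3 := by positivity
  have hB1 : 1 ≤ B := by rw [hBdef]; linarith
  have hB0 : (0:ℝ) < B := by linarith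
  have hBc2 : c2 ≤ B := by rw [hBdef]; linarith
  have hB2c2 : 2 * c2 ≤ B := by rw [hBdef]; linarith
  have h47 : 4 * c2 / c3 ≤ 7 * c2 / c3 := (div_le_div_iff_of_pos_right hc3).mpr (by linarith)
  have hBδ : 4 * c2 / c3 ≤ B := by rw [hBdef]; linarith
  have hBw : 3 * c2 + 4 * c2 / c3 ≤ B := by rw [hBdef]; linarith
  have hB2 : (2:ℝ) ≤ B := by rw [hBdef]; linarith
  have h1c1B : 1 - c1 ≤ B := by linarith
  -- Lipschitz constant and final constant
  set L : ℝ := 11 * (B ^ 3 / (c3 ^ 2 * c1 ^ 3)) with hLdef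
  have hL0 : (0:ℝ) < L := by rw [hLdef]; positivity
  refine ⟨72 * L ^ 2, by positivity, ?_⟩
  intro ph πh e11h e10h wh dh hph hπh he11h he10h hwh hdh hrelh φh ρh hφh hρh θh hθh
  intro rp1 rp0 rπ1 rπ0 rφ rW re10 rδ hrp1 hrp0 hrπ1 hrπ0 hrφ hrW hre10 hrδ
  -- bounds on hatted quantities
  have hρh_bd : ∀ x, 0 ≤ ρh x ∧ ρh x ≤ 2 := by
    intro x
    rw [hρh x]
    have h1 := hph true x; have h2 := hπh true x
    have h3 := hph false x; have h4 := hπh false x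
    have hm1 : 0 ≤ ph true x * πh true x := mul_nonneg (by linarith [h1.1]) (by linarith [h2.1])
    have hm2 : 0 ≤ ph false x * πh false x :=
      mul_nonneg (by linarith [h3.1]) (by linarith [h4.1])
    have hM1 : ph true x * πh true x ≤ 1 :=
      mul_le_one₀ (by linarith [h1.2]) (by linarith [h2.1]) (by linarith [h2.2])
    have hM2 : ph false x * πh false x ≤ 1 :=
      mul_le_one₀ (by linarith [h3.2]) (by linarith [h4.1]) (by linarith [h4.2])
    exact ⟨by linarith, by linarith⟩
  have hφh_bd : ∀ x, |φh x| ≤ 2 * c2 := by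
    intro x
    rw [hφh x]
    have h1 := he11h x; have h2 := he10h x
    exact abs_le.mpr ⟨by linarith [h1.1, h2.2], by linarith [h1.2, h2.1]⟩
  -- a.e. pointwise bound
  have hae : ∀ᵐ ω ∂P,
      ((b2r (A ω) * dh (X ω) + θh ω) - (b2r (A ω) * δs (X ω) + θ ω)) ^ 2
      ≤ (72 * L ^ 2) * ((dh (X ω) - δs (X ω)) ^ 2 + (φh (X ω) - φ (X ω)) ^ 2
          + (wh (X ω) - w (X ω)) ^ 2 + (e10h (X ω) - e1z false (X ω)) ^ 2
          + (ph true (X ω) - p true (X ω)) ^ 2 + (ph false (X ω) - p false (X ω)) ^ 2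
          + (πh true (X ω) - π true (X ω)) ^ 2 + (πh false (X ω) - π false (X ω)) ^ 2) := by
    filter_upwards [hYbd] with ω hω
    have hs_abs : |2 * b2r (Z ω) - 1| = 1 := by cases hzz : Z ω <;> norm_num [b2r, hzz]
    have hDtrue : |p true (X ω) - p false (X ω)| ≤ B := by
      have h1 := hpbd true (X ω); have h0 := hpbd false (X ω)
      have : |p true (X ω) - p false (X ω)| ≤ 1 :=
        abs_le.mpr ⟨by linarith [h1.1, h0.2], by linarith [h1.2, h0.1]⟩
      linarith
    have hDhat : |ph true (X ω) - ph false (X ω)| ≤ B := by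
      have h1 := hph true (X ω); have h0 := hph false (X ω)
      have : |ph true (X ω) - ph false (X ω)| ≤ 1 :=
        abs_le.mpr ⟨by linarith [h1.1, h0.2], by linarith [h1.2, h0.1]⟩
      linarith
    have hρ_abs : |ρ (X ω)| ≤ B := by
      have h := hρbd (X ω)
      exact abs_le.mpr ⟨by linarith [h.1], by linarith [h.2]⟩
    have hρh_abs : |ρh (X ω)| ≤ B := by
      have h := hρh_bd (X ω)
      exact abs_le.mpr ⟨by linarith [h.1], by linarith [h.2]⟩
    have hlip := lip c1 c3 B hc1 hc11 hc3 hc31 hB1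
      (b2r (A ω)) (b2r (Z ω)) (2 * b2r (Z ω) - 1) (Y ω)
      (b2r_nonneg _) (b2r_le_one _) (b2r_nonneg _) (b2r_le_one _) hs_abs (hω.trans hBc2)
      (ρ (X ω)) (p true (X ω) - p false (X ω)) (π (Z ω) (X ω)) (p (Z ω) (X ω))
      (δs (X ω)) (φ (X ω)) (w (X ω)) (e1z false (X ω))
      (ρh (X ω)) (ph true (X ω) - ph false (X ω)) (πh (Z ω) (X ω)) (ph (Z ω) (X ω))
      (dh (X ω)) (φh (X ω)) (wh (X ω)) (e10h (X ω))
      hρ_abs hρh_abs (hrel (X ω)) (hrelh (X ω)) hDtrue hDhat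
      ((hπbd (Z ω) (X ω)).1) ((hπh (Z ω) (X ω)).1)
      ((hπbd (Z ω) (X ω)).2.trans h1c1B) ((hπh (Z ω) (X ω)).2.trans h1c1B)
      ((hpbd (Z ω) (X ω)).1) ((hph (Z ω) (X ω)).1)
      ((hpbd (Z ω) (X ω)).2.trans h1c1B) ((hph (Z ω) (X ω)).2.trans h1c1B)
      ((hδs_bd (X ω)).trans hBδ)
      (abs_le.mpr ⟨by linarith [(hdh (X ω)).1], by linarith [(hdh (X ω)).2]⟩)
      ((hφ_bd (X ω)).trans hB2c2) ((hφh_bd (X ω)).trans hB2c2)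
      ((hw_bd (X ω)).trans hBw)
      (abs_le.mpr ⟨by linarith [(hwh (X ω)).1], by linarith [(hwh (X ω)).2]⟩)
      ((he1z_bd false (X ω)).trans hBc2)
      (abs_le.mpr ⟨by linarith [(he10h (X ω)).1], by linarith [(he10h (X ω)).2]⟩)
    have habs : |(b2r (A ω) * dh (X ω) + θh ω) - (b2r (A ω) * δs (X ω) + θ ω)|
        ≤ L * (|ρh (X ω) - ρ (X ω)|
            + |ph true (X ω) - ph false (X ω) - (p true (X ω) - p false (X ω))|
            + |πh (Z ω) (X ω) - π (Z ω) (X ω)| + |ph (Z ω) (X ω) - p (Z ω) (X ω)|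
            + |dh (X ω) - δs (X ω)| + |φh (X ω) - φ (X ω)| + |wh (X ω) - w (X ω)|
            + |e10h (X ω) - e1z false (X ω)|) := by
      rw [hθh ω, hθ ω, hLdef]
      exact hlip
    -- consolidate: each parameter difference vs the eight canonical ones
    set S : ℝ := |dh (X ω) - δs (X ω)| + |φh (X ω) - φ (X ω)| + |wh (X ω) - w (X ω)|
        + |e10h (X ω) - e1z false (X ω)| + |ph true (X ω) - p true (X ω)|
        + |ph false (X ω) - p false (X ω)| + |πh true (X ω) - π true (X ω)|
        + |πh false (X ω) - π false (X ω)| with hSdef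
    have hd1 : |ρh (X ω) - ρ (X ω)| ≤ |ph true (X ω) - p true (X ω)|
        + |πh true (X ω) - π true (X ω)| + |ph false (X ω) - p false (X ω)|
        + |πh false (X ω) - π false (X ω)| := by
      rw [hρh (X ω), hρ_id (X ω)]
      have hsplit : ph true (X ω) * πh true (X ω) + ph false (X ω) * πh false (X ω)
          - (p true (X ω) * π true (X ω) + p false (X ω) * π false (X ω))
          = (ph true (X ω) * πh true (X ω) - p true (X ω) * π true (X ω))
            + (ph false (X ω) * πh false (X ω) - p false (X ω) * π false (X ω)) := by ring
      have hA1 : |p true (X ω)| ≤ 1 := by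
        have h := hpbd true (X ω); exact abs_le.mpr ⟨by linarith [h.1], by linarith [h.2]⟩
      have hA2 : |πh true (X ω)| ≤ 1 := by
        have h := hπh true (X ω); exact abs_le.mpr ⟨by linarith [h.1], by linarith [h.2]⟩
      have hA3 : |p false (X ω)| ≤ 1 := by
        have h := hpbd false (X ω); exact abs_le.mpr ⟨by linarith [h.1], by linarith [h.2]⟩
      have hA4 : |πh false (X ω)| ≤ 1 := by
        have h := hπh false (X ω); exact abs_le.mpr ⟨by linarith [h.1], by linarith [h.2]⟩
      have hm1 := abs_mul_sub (p true (X ω)) (ph true (X ω)) (π true (X ω)) (πh true (X ω))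
        1 1 hA1 hA2
      have hm2 := abs_mul_sub (p false (X ω)) (ph false (X ω)) (π false (X ω)) (πh false (X ω))
        1 1 hA3 hA4
      calc |ph true (X ω) * πh true (X ω) + ph false (X ω) * πh false (X ω)
          - (p true (X ω) * π true (X ω) + p false (X ω) * π false (X ω))|
          ≤ |ph true (X ω) * πh true (X ω) - p true (X ω) * π true (X ω)|
            + |ph false (X ω) * πh false (X ω) - p false (X ω) * π false (X ω)| := by
            rw [hsplit]; exact abs_add_le _ _
        _ ≤ _ := by linarith
    have hd2 : |ph true (X ω) - ph false (X ω) - (p true (X ω) - p false (X ω))|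
        ≤ |ph true (X ω) - p true (X ω)| + |ph false (X ω) - p false (X ω)| := by
      have hh : ph true (X ω) - ph false (X ω) - (p true (X ω) - p false (X ω))
          = (ph true (X ω) - p true (X ω)) - (ph false (X ω) - p false (X ω)) := by ring
      rw [hh]
      exact abs_sub'' _ _
    have hd3 : |πh (Z ω) (X ω) - π (Z ω) (X ω)|
        ≤ |πh true (X ω) - π true (X ω)| + |πh false (X ω) - π false (X ω)| := by
      cases hzz : Z ω
      · linarith [abs_nonneg (πh true (X ω) - π true (X ω))]
      · linarith [abs_nonneg (πh false (X ω) - π false (X ω))]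
    have hd4 : |ph (Z ω) (X ω) - p (Z ω) (X ω)|
        ≤ |ph true (X ω) - p true (X ω)| + |ph false (X ω) - p false (X ω)| := by
      cases hzz : Z ω
      · linarith [abs_nonneg (ph true (X ω) - p true (X ω))]
      · linarith [abs_nonneg (ph false (X ω) - p false (X ω))]
    have hsub : |ρh (X ω) - ρ (X ω)|
        + |ph true (X ω) - ph false (X ω) - (p true (X ω) - p false (X ω))|
        + |πh (Z ω) (X ω) - π (Z ω) (X ω)| + |ph (Z ω) (X ω) - p (Z ω) (X ω)|
        + |dh (X ω) - δs (X ω)| + |φh (X ω) - φ (X ω)| + |wh (X ω) - w (X ω)|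
        + |e10h (X ω) - e1z false (X ω)| ≤ 3 * S := by
      rw [hSdef]
      have n1 := abs_nonneg (dh (X ω) - δs (X ω))
      have n2 := abs_nonneg (φh (X ω) - φ (X ω))
      have n3 := abs_nonneg (wh (X ω) - w (X ω))
      have n4 := abs_nonneg (e10h (X ω) - e1z false (X ω))
      have n5 := abs_nonneg (ph true (X ω) - p true (X ω))
      have n6 := abs_nonneg (ph false (X ω) - p false (X ω))
      have n7 := abs_nonneg (πh true (X ω) - π true (X ω))
      have n8 := abs_nonneg (πh false (X ω) - π false (X ω))
      linarith
    have habs3 : |(b2r (A ω) * dh (X ω) + θh ω) - (b2r (A ω) * δs (X ω) + θ ω)|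
        ≤ (3 * L) * S := by
      have h := habs.trans (mul_le_mul_of_nonneg_left hsub hL0.le)
      calc |(b2r (A ω) * dh (X ω) + θh ω) - (b2r (A ω) * δs (X ω) + θ ω)|
          ≤ L * (3 * S) := h
        _ = (3 * L) * S := by ring
    have hsq : ((b2r (A ω) * dh (X ω) + θh ω) - (b2r (A ω) * δs (X ω) + θ ω)) ^ 2
        ≤ ((3 * L) * S) ^ 2 := by
      have h := pow_le_pow_left₀
        (abs_nonneg ((b2r (A ω) * dh (X ω) + θh ω) - (b2r (A ω) * δs (X ω) + θ ω))) habs3 2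
      rwa [sq_abs] at h
    have hS2 : S ^ 2 ≤ 8 * ((dh (X ω) - δs (X ω)) ^ 2 + (φh (X ω) - φ (X ω)) ^ 2
        + (wh (X ω) - w (X ω)) ^ 2 + (e10h (X ω) - e1z false (X ω)) ^ 2
        + (ph true (X ω) - p true (X ω)) ^ 2 + (ph false (X ω) - p false (X ω)) ^ 2
        + (πh true (X ω) - π true (X ω)) ^ 2 + (πh false (X ω) - π false (X ω)) ^ 2) := by
      rw [hSdef]
      have h := sq_sum8 (|dh (X ω) - δs (X ω)|) (|φh (X ω) - φ (X ω)|) (|wh (X ω) - w (X ω)|)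
        (|e10h (X ω) - e1z false (X ω)|) (|ph true (X ω) - p true (X ω)|)
        (|ph false (X ω) - p false (X ω)|) (|πh true (X ω) - π true (X ω)|)
        (|πh false (X ω) - π false (X ω)|)
      simpa [sq_abs] using h
    calc ((b2r (A ω) * dh (X ω) + θh ω) - (b2r (A ω) * δs (X ω) + θ ω)) ^ 2
        ≤ ((3 * L) * S) ^ 2 := hsq
      _ = (9 * L ^ 2) * S ^ 2 := by ring
      _ ≤ (9 * L ^ 2) * (8 * ((dh (X ω) - δs (X ω)) ^ 2 + (φh (X ω) - φ (X ω)) ^ 2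
          + (wh (X ω) - w (X ω)) ^ 2 + (e10h (X ω) - e1z false (X ω)) ^ 2
          + (ph true (X ω) - p true (X ω)) ^ 2 + (ph false (X ω) - p false (X ω)) ^ 2
          + (πh true (X ω) - π true (X ω)) ^ 2 + (πh false (X ω) - π false (X ω)) ^ 2)) :=
          mul_le_mul_of_nonneg_left hS2 (by positivity)
      _ = _ := by ring
  -- integrability of compositions with X
  have hintg : ∀ g : 𝒳 → ℝ, Integrable (fun ω => g (X ω)) P := by
    intro g
    obtain ⟨M, hM⟩ := Finite.exists_le (fun x : 𝒳 => |g x|)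
    exact Integrable.mono' (integrable_const M)
      ((measurable_of_countable g).comp hX).aestronglyMeasurable
      (Filter.Eventually.of_forall fun ω => by simpa [Real.norm_eq_abs] using hM (X ω))
  have hg1 := hintg (fun x => (dh x - δs x) ^ 2)
  have hg2 := hintg (fun x => (φh x - φ x) ^ 2)
  have hg3 := hintg (fun x => (wh x - w x) ^ 2)
  have hg4 := hintg (fun x => (e10h x - e1z false x) ^ 2)
  have hg5 := hintg (fun x => (ph true x - p true x) ^ 2)
  have hg6 := hintg (fun x => (ph false x - p false x) ^ 2)
  have hg7 := hintg (fun x => (πh true x - π true x) ^ 2)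
  have hg8 := hintg (fun x => (πh false x - π false x) ^ 2)
  have hsum : Integrable (fun ω => (dh (X ω) - δs (X ω)) ^ 2 + (φh (X ω) - φ (X ω)) ^ 2
      + (wh (X ω) - w (X ω)) ^ 2 + (e10h (X ω) - e1z false (X ω)) ^ 2
      + (ph true (X ω) - p true (X ω)) ^ 2 + (ph false (X ω) - p false (X ω)) ^ 2
      + (πh true (X ω) - π true (X ω)) ^ 2 + (πh false (X ω) - π false (X ω)) ^ 2) P :=
    ((((((hg1.add hg2).add hg3).add hg4).add hg5).add hg6).add hg7).add hg8
  have hmono : ∫ ω, ((b2r (A ω) * dh (X ω) + θh ω) - (b2r (A ω) * δs (X ω) + θ ω)) ^ 2 ∂P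
      ≤ ∫ ω, (72 * L ^ 2) * ((dh (X ω) - δs (X ω)) ^ 2 + (φh (X ω) - φ (X ω)) ^ 2
          + (wh (X ω) - w (X ω)) ^ 2 + (e10h (X ω) - e1z false (X ω)) ^ 2
          + (ph true (X ω) - p true (X ω)) ^ 2 + (ph false (X ω) - p false (X ω)) ^ 2
          + (πh true (X ω) - π true (X ω)) ^ 2 + (πh false (X ω) - π false (X ω)) ^ 2) ∂P :=
    integral_mono_of_nonneg (Filter.Eventually.of_forall fun ω => sq_nonneg _)
      (hsum.const_mul _) hae
  have hpull : ∫ ω, (72 * L ^ 2) * ((dh (X ω) - δs (X ω)) ^ 2 + (φh (X ω) - φ (X ω)) ^ 2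
      + (wh (X ω) - w (X ω)) ^ 2 + (e10h (X ω) - e1z false (X ω)) ^ 2
      + (ph true (X ω) - p true (X ω)) ^ 2 + (ph false (X ω) - p false (X ω)) ^ 2
      + (πh true (X ω) - π true (X ω)) ^ 2 + (πh false (X ω) - π false (X ω)) ^ 2) ∂P
      = (72 * L ^ 2) * ((∫ ω, (dh (X ω) - δs (X ω)) ^ 2 ∂P)
        + (∫ ω, (φh (X ω) - φ (X ω)) ^ 2 ∂P) + (∫ ω, (wh (X ω) - w (X ω)) ^ 2 ∂P)
        + (∫ ω, (e10h (X ω) - e1z false (X ω)) ^ 2 ∂P)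
        + (∫ ω, (ph true (X ω) - p true (X ω)) ^ 2 ∂P)
        + (∫ ω, (ph false (X ω) - p false (X ω)) ^ 2 ∂P)
        + (∫ ω, (πh true (X ω) - π true (X ω)) ^ 2 ∂P)
        + (∫ ω, (πh false (X ω) - π false (X ω)) ^ 2 ∂P)) := by
    have hg12 : Integrable (fun ω => (dh (X ω) - δs (X ω)) ^ 2 + (φh (X ω) - φ (X ω)) ^ 2) P :=
      hg1.add hg2
    have hg13 : Integrable (fun ω => (dh (X ω) - δs (X ω)) ^ 2 + (φh (X ω) - φ (X ω)) ^ 2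
        + (wh (X ω) - w (X ω)) ^ 2) P := hg12.add hg3
    have hg14 : Integrable (fun ω => (dh (X ω) - δs (X ω)) ^ 2 + (φh (X ω) - φ (X ω)) ^ 2
        + (wh (X ω) - w (X ω)) ^ 2 + (e10h (X ω) - e1z false (X ω)) ^ 2) P := hg13.add hg4
    have hg15 : Integrable (fun ω => (dh (X ω) - δs (X ω)) ^ 2 + (φh (X ω) - φ (X ω)) ^ 2
        + (wh (X ω) - w (X ω)) ^ 2 + (e10h (X ω) - e1z false (X ω)) ^ 2
        + (ph true (X ω) - p true (X ω)) ^ 2) P := hg14.add hg5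
    have hg16 : Integrable (fun ω => (dh (X ω) - δs (X ω)) ^ 2 + (φh (X ω) - φ (X ω)) ^ 2
        + (wh (X ω) - w (X ω)) ^ 2 + (e10h (X ω) - e1z false (X ω)) ^ 2
        + (ph true (X ω) - p true (X ω)) ^ 2 + (ph false (X ω) - p false (X ω)) ^ 2) P :=
      hg15.add hg6
    have hg17 : Integrable (fun ω => (dh (X ω) - δs (X ω)) ^ 2 + (φh (X ω) - φ (X ω)) ^ 2
        + (wh (X ω) - w (X ω)) ^ 2 + (e10h (X ω) - e1z false (X ω)) ^ 2
        + (ph true (X ω) - p true (X ω)) ^ 2 + (ph false (X ω) - p false (X ω)) ^ 2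
        + (πh true (X ω) - π true (X ω)) ^ 2) P := hg16.add hg7
    rw [integral_const_mul]
    congr 1
    rw [integral_add hg17 hg8, integral_add hg16 hg7, integral_add hg15 hg6,
      integral_add hg14 hg5, integral_add hg13 hg4, integral_add hg12 hg3,
      integral_add hg1 hg2]
  have hr1 : rδ ^ 2 = ∫ ω, (dh (X ω) - δs (X ω)) ^ 2 ∂P := by
    rw [hrδ, Real.sq_sqrt (integral_nonneg fun ω => sq_nonneg _)]
  have hr2 : rφ ^ 2 = ∫ ω, (φh (X ω) - φ (X ω)) ^ 2 ∂P := by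
    rw [hrφ, Real.sq_sqrt (integral_nonneg fun ω => sq_nonneg _)]
  have hr3 : rW ^ 2 = ∫ ω, (wh (X ω) - w (X ω)) ^ 2 ∂P := by
    rw [hrW, Real.sq_sqrt (integral_nonneg fun ω => sq_nonneg _)]
  have hr4 : re10 ^ 2 = ∫ ω, (e10h (X ω) - e1z false (X ω)) ^ 2 ∂P := by
    rw [hre10, Real.sq_sqrt (integral_nonneg fun ω => sq_nonneg _)]
  have hr5 : rp1 ^ 2 = ∫ ω, (ph true (X ω) - p true (X ω)) ^ 2 ∂P := by
    rw [hrp1, Real.sq_sqrt (integral_nonneg fun ω => sq_nonneg _)]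
  have hr6 : rp0 ^ 2 = ∫ ω, (ph false (X ω) - p false (X ω)) ^ 2 ∂P := by
    rw [hrp0, Real.sq_sqrt (integral_nonneg fun ω => sq_nonneg _)]
  have hr7 : rπ1 ^ 2 = ∫ ω, (πh true (X ω) - π true (X ω)) ^ 2 ∂P := by
    rw [hrπ1, Real.sq_sqrt (integral_nonneg fun ω => sq_nonneg _)]
  have hr8 : rπ0 ^ 2 = ∫ ω, (πh false (X ω) - π false (X ω)) ^ 2 ∂P := by
    rw [hrπ0, Real.sq_sqrt (integral_nonneg fun ω => sq_nonneg _)]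
  rw [hr1, hr2, hr3, hr4, hr5, hr6, hr7, hr8]
  calc ∫ ω, ((b2r (A ω) * dh (X ω) + θh ω) - (b2r (A ω) * δs (X ω) + θ ω)) ^ 2 ∂P
      ≤ _ := hmono
    _ = _ := hpull
end
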